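/- arXiv:2002.07423 — 13 statements merged into one kernel-verified Lean document; each statement's English description precedes it below -/
import Mathlib

section
/- Let X be a separable metrizable space containing a subset C homeomorphic to the Cantor set, and let D be a countable dense subset of X with D ∩ C dense in C. Then D is not a Gδ subset of X. -/
open TopologicalSpace

open Filter Set Topology in
/-- The Cantor space has no isolated points. -/
theorem aux_cantor_punctured (x : ℕ → Bool) : Filter.NeBot (𝓝[≠] x) := by
  have hy : ∀ n : ℕ, Function.update x n (!x n) ≠ x := by
    intro n h
    have := congrFun h n
    simp [Function.update_self] at this
  have htend : Tendsto (fun n => Function.update x n (!x n)) atTop (𝓝 x) := by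
    rw [tendsto_pi_nhds]
    intro k
    apply tendsto_nhds_of_eventually_eq
    filter_upwards [Filter.eventually_gt_atTop k] with n hn
    exact Function.update_of_ne hn.ne _ _
  have h2 : Tendsto (fun n => Function.update x n (!x n)) atTop (𝓝[≠] x) :=
    tendsto_nhdsWithin_of_tendsto_nhds_of_eventually_within _ htend
      (Filter.Eventually.of_forall fun n => hy n)
  exact h2.neBot

/-- Preimage of a Gδ set under a continuous map is Gδ. -/
theorem aux_isGδ_preimage {Y X : Type*} [TopologicalSpace Y] [TopologicalSpace X]
    {f : Y → X} (hf : Continuous f) {s : Set X} (hs : IsGδ s) : IsGδ (f ⁻¹' s) := by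
  obtain ⟨T, hTo, hTc, rfl⟩ := hs
  rw [Set.preimage_sInter]
  exact IsGδ.biInter hTc fun t ht => ((hTo t ht).preimage hf).isGδ

open Filter Set Topology in
/-- In a separable metrizable space containing a copy `C` of the Cantor set, a countable
dense subset `D` with `D ∩ C` dense in `C` is not a `Gδ` subset. -/
theorem stmt_1 {X : Type*} [TopologicalSpace X] [MetrizableSpace X] [SeparableSpace X]
    (C : Set X) (hC : Nonempty (C ≃ₜ (ℕ → Bool)))
    (D : Set X) (hDc : D.Countable) (hDd : Dense D)
    (hDC : C ⊆ closure (D ∩ C)) :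
    ¬ IsGδ D := by
  intro hGδ
  obtain ⟨e⟩ := hC
  letI := metrizableSpaceMetric X
  -- the subtype C is compact and T2, hence Baire
  haveI : CompactSpace C := e.symm.compactSpace
  haveI : BaireSpace C := BaireSpace.of_t2Space_locallyCompactSpace
  haveI : Nonempty C := e.toEquiv.nonempty
  -- no isolated points in C
  haveI hiso : ∀ x : C, Filter.NeBot (𝓝[≠] x) := by
    intro x
    have hcont : Filter.Tendsto e.symm (𝓝 (e x)) (𝓝 x) := by
      simpa using e.symm.continuous.tendsto (e x)
    have h2 : Filter.Tendsto e.symm (𝓝[≠] (e x)) (𝓝[≠] x) := by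
      apply tendsto_nhdsWithin_of_tendsto_nhds_of_eventually_within _
        (hcont.mono_left nhdsWithin_le_nhds)
      filter_upwards [self_mem_nhdsWithin] with y hy
      simp only [Set.mem_compl_iff, Set.mem_singleton_iff] at hy ⊢
      intro h
      exact hy (by rw [← h]; simp)
    haveI := aux_cantor_punctured (e x)
    exact h2.neBot
  -- S = D ∩ C viewed in the subtype
  set S : Set C := Subtype.val ⁻¹' D with hS
  have hSgδ : IsGδ S := aux_isGδ_preimage continuous_subtype_val hGδ
  have hSd : Dense S := by
    intro x
    rw [IsInducing.subtypeVal.closure_eq_preimage_closure_image, Set.mem_preimage]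
    have himg : (Subtype.val : C → X) '' S = C ∩ D := Subtype.image_preimage_coe C D
    rw [himg, Set.inter_comm]
    exact hDC x.2
  have hSc : S.Countable := hDc.preimage Subtype.val_injective
  -- S is residual
  have hres : S ∈ residual C := mem_residual.2 ⟨S, subset_rfl, hSgδ, hSd⟩
  -- Sᶜ is residual since S is countable and C has no isolated points
  have hres' : Sᶜ ∈ residual C := by
    have hc : Sᶜ = ⋂ x ∈ S, ({x}ᶜ : Set C) := by
      ext y
      simp only [Set.mem_compl_iff, Set.mem_iInter, Set.mem_singleton_iff]
      exact ⟨fun h x hx hxy => h (hxy ▸ hx), fun h hy => h y hy rfl⟩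
    rw [hc]
    exact (countable_bInter_mem hSc).mpr fun x _ =>
      residual_of_dense_open isOpen_compl_singleton (dense_compl_singleton x)
  have hempty : (∅ : Set C) ∈ residual C := by
    have := Filter.inter_mem hres hres'
    simpa using this
  have hd := dense_of_mem_residual hempty
  simpa using hd.nonempty
end

section
/- Every homogeneous topological space is either meager in itself or a Baire space. -/
open Set Topology Filter

section aux

variable {X : Type*} [TopologicalSpace X]

lemma aux_nwd_isMeagre {s : Set X} (hs : IsNowhereDense s) : IsMeagre s :=
  isMeagre_iff_countable_union_isNowhereDense.2
    ⟨{s}, by simpa using hs, countable_singleton s, by simp⟩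

lemma aux_meagre_union {s t : Set X} (hs : IsMeagre s) (ht : IsMeagre t) :
    IsMeagre (s ∪ t) := by
  rw [IsMeagre, compl_union]
  exact Filter.inter_mem hs ht

lemma aux_meagre_image (e : X ≃ₜ X) {s : Set X} (hs : IsMeagre s) :
    IsMeagre (e '' s) := by
  have h1 : (e '' s)ᶜ ∈ (residual X).map e := by
    rw [Filter.mem_map]
    have h2 : e ⁻¹' (e '' s)ᶜ = sᶜ := by
      rw [preimage_compl, e.preimage_image]
    rw [h2]; exact hs
  rwa [e.residual_map_eq] at h1

lemma aux_exists_nat_cover {s : Set X} (hs : IsMeagre s) :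
    ∃ f : ℕ → Set X, (∀ n, IsNowhereDense (f n)) ∧ s ⊆ ⋃ n, f n := by
  obtain ⟨S, hS1, hS2, hS3⟩ := isMeagre_iff_countable_union_isNowhereDense.1 hs
  have hne : (S ∪ {(∅ : Set X)}).Nonempty := ⟨∅, Or.inr rfl⟩
  obtain ⟨f, hf⟩ := (hS2.union (countable_singleton _)).exists_eq_range hne
  refine ⟨f, fun n => ?_, ?_⟩
  · have : f n ∈ S ∪ {(∅ : Set X)} := hf ▸ mem_range_self n
    rcases this with h | h
    · exact hS1 _ h
    · rw [mem_singleton_iff] at h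
      rw [h]; exact isNowhereDense_empty
  · intro x hx
    obtain ⟨t, ht, hxt⟩ := hS3 hx
    have : t ∈ range f := hf ▸ Or.inl ht
    obtain ⟨n, rfl⟩ := this
    exact mem_iUnion.2 ⟨n, hxt⟩

/-- Banach category theorem: if every point has an open meagre neighbourhood,
the whole space is meagre. -/
lemma aux_banach_category (h : ∀ x : X, ∃ U : Set X, IsOpen U ∧ IsMeagre U ∧ x ∈ U) :
    IsMeagre (Set.univ : Set X) := by
  classical
  set S : Set (Set (Set X)) :=
    {𝒟 | (∀ D ∈ 𝒟, IsOpen D ∧ IsMeagre D) ∧ 𝒟.PairwiseDisjoint id} with hSdef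
  obtain ⟨𝒟, h𝒟⟩ : ∃ m, Maximal (· ∈ S) m := by
    apply zorn_subset
    intro c hc hchain
    refine ⟨⋃₀ c, ⟨?_, ?_⟩, fun s hs => subset_sUnion_of_mem hs⟩
    · rintro D ⟨t, htc, hDt⟩
      exact (hc htc).1 D hDt
    · rintro a ⟨ta, hta, haa⟩ b ⟨tb, htb, hbb⟩ hab
      rcases hchain.total hta htb with hle | hle
      · exact (hc htb).2 (hle haa) hbb hab
      · exact (hc hta).2 haa (hle hbb) hab
  have h𝒟S : 𝒟 ∈ S := h𝒟.prop
  have hmem : ∀ D ∈ 𝒟, IsOpen D ∧ IsMeagre D := h𝒟S.1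
  have hdisj : 𝒟.PairwiseDisjoint id := h𝒟S.2
  set V : Set X := ⋃₀ 𝒟 with hVdef
  have hVopen : IsOpen V := isOpen_sUnion fun D hD => (hmem D hD).1
  -- V is dense
  have hVdense : Dense V := by
    rw [dense_iff_inter_open]
    rintro W hW ⟨x, hx⟩
    by_contra hempty
    rw [Set.not_nonempty_iff_eq_empty] at hempty
    obtain ⟨U, hUo, hUm, hxU⟩ := h x
    have hWUV : (W ∩ U) ∩ V = ∅ := by
      apply subset_empty_iff.1
      rw [← hempty]
      exact inter_subset_inter_left _ inter_subset_left
    have hWUne : (W ∩ U).Nonempty := ⟨x, hx, hxU⟩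
    have hnotmem : W ∩ U ∉ 𝒟 := by
      intro hmem'
      have : W ∩ U ⊆ V := subset_sUnion_of_mem hmem'
      obtain ⟨y, hy⟩ := hWUne
      exact absurd (hWUV ▸ ⟨hy, this hy⟩) (notMem_empty y)
    have hins : insert (W ∩ U) 𝒟 ∈ S := by
      constructor
      · rintro D (rfl | hD)
        · exact ⟨hW.inter hUo, hUm.mono inter_subset_right⟩
        · exact hmem D hD
      · refine hdisj.insert fun D hD _ => ?_
        simp only [id]
        rw [Set.disjoint_left]
        intro z hz hzD
        have : z ∈ (W ∩ U) ∩ V := ⟨hz, subset_sUnion_of_mem hD hzD⟩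
        rw [hWUV] at this
        exact this
    exact hnotmem (h𝒟.2 hins (subset_insert _ _) (mem_insert _ _))
  -- V is meagre
  have hVmeagre : IsMeagre V := by
    have hch : ∀ D, D ∈ 𝒟 → ∃ f : ℕ → Set X,
        (∀ n, IsNowhereDense (f n)) ∧ D ⊆ ⋃ n, f n :=
      fun D hD => aux_exists_nat_cover (hmem D hD).2
    choose! f hf1 hf2 using hch
    set E : ℕ → Set X := fun n => ⋃ D ∈ 𝒟, (f D n ∩ D) with hEdef
    have hVsub : V ⊆ ⋃ n, E n := by
      rintro x ⟨D, hD, hxD⟩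
      obtain ⟨n, hn⟩ := mem_iUnion.1 (hf2 D hD hxD)
      exact mem_iUnion.2 ⟨n, mem_iUnion₂.2 ⟨D, hD, hn, hxD⟩⟩
    have hEnwd : ∀ n, IsNowhereDense (E n) := by
      intro n
      rw [IsNowhereDense, eq_empty_iff_forall_notMem]
      intro x hx
      set O : Set X := interior (closure (E n)) with hOdef
      have hOopen : IsOpen O := isOpen_interior
      obtain ⟨y, hyO, hyV⟩ := dense_iff_inter_open.1 hVdense O hOopen ⟨x, hx⟩
      obtain ⟨D, hD, hyD⟩ := hyV
      have hkey : O ∩ D ⊆ closure (f D n ∩ D) := by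
        intro z ⟨hzO, hzD⟩
        rw [mem_closure_iff]
        intro o ho hzo
        have hz' : z ∈ closure (E n) := interior_subset hzO
        obtain ⟨w, hw1, hw2⟩ := mem_closure_iff.1 hz' (o ∩ D) (ho.inter (hmem D hD).1)
          ⟨hzo, hzD⟩
        obtain ⟨D', hD', hwf', hwD'⟩ := by
          simpa only [E, mem_iUnion, exists_prop] using hw2
        have hDD' : D = D' := by
          by_contra hne
          exact Set.disjoint_left.1 (hdisj hD hD' hne) hw1.2 hwD'
        exact ⟨w, hw1.1, hDD' ▸ hwf', hDD' ▸ hwD'⟩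
      have hsub2 : O ∩ D ⊆ interior (closure (f D n)) :=
        interior_maximal (hkey.trans (closure_mono inter_subset_left))
          (hOopen.inter (hmem D hD).1)
      rw [hf1 D hD n] at hsub2
      exact hsub2 ⟨hyO, hyD⟩
    exact (isMeagre_iUnion fun n => aux_nwd_isMeagre (hEnwd n)).mono hVsub
  -- Vᶜ is meagre
  have hVcmeagre : IsMeagre Vᶜ := by
    apply aux_nwd_isMeagre
    rw [IsNowhereDense, hVopen.isClosed_compl.closure_eq, interior_compl,
      hVdense.closure_eq, compl_univ]
  have : (Set.univ : Set X) = V ∪ Vᶜ := (union_compl_self V).symm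
  rw [this]
  exact aux_meagre_union hVmeagre hVcmeagre

end aux

/-- Every homogeneous topological space is either meager in itself or a Baire space. -/
theorem stmt_2 {X : Type*} [TopologicalSpace X]
    (hhom : ∀ x y : X, ∃ h : X ≃ₜ X, h x = y) :
    IsMeagre (Set.univ : Set X) ∨ BaireSpace X := by
  by_cases hm : IsMeagre (Set.univ : Set X)
  · exact Or.inl hm
  · refine Or.inr ⟨fun f ho hd => ?_⟩
    by_contra hnd
    rw [dense_iff_inter_open] at hnd
    push_neg at hnd
    obtain ⟨W, hWo, hWne, hWdisj⟩ := hnd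
    -- W is a nonempty open meagre set
    have hWsub : W ⊆ ⋃ n, (f n)ᶜ := by
      intro z hz
      have : z ∉ ⋂ n, f n := fun h' =>
        (eq_empty_iff_forall_notMem.1 hWdisj z) ⟨hz, h'⟩
      simp only [mem_iInter, not_forall] at this
      obtain ⟨n, hn⟩ := this
      exact mem_iUnion.2 ⟨n, hn⟩
    have hWmeagre : IsMeagre W := by
      refine (isMeagre_iUnion fun n => aux_nwd_isMeagre ?_).mono hWsub
      rw [IsNowhereDense, (ho n).isClosed_compl.closure_eq, interior_compl,
        (hd n).closure_eq, compl_univ]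
    obtain ⟨u, hu⟩ := hWne
    -- every point has an open meagre neighbourhood
    have hnbhd : ∀ x : X, ∃ U : Set X, IsOpen U ∧ IsMeagre U ∧ x ∈ U := by
      intro x
      obtain ⟨e, he⟩ := hhom u x
      exact ⟨e '' W, e.isOpenMap W hWo, aux_meagre_image e hWmeagre, ⟨u, hu, he⟩⟩
    exact hm (aux_banach_category hnbhd)
end

section
/- Let X be a separable homogeneous topological space that contains a nontrivial convergent sequence (a sequence of points distinct from x converging to some x). Then X contains a countable dense subset D that is sequentially crowded, i.e., every point of D is the limit of a sequence of points of D distinct from it. -/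
open Filter Topology TopologicalSpace

/-- A separable homogeneous space with a nontrivial convergent sequence contains a
sequentially crowded countable dense subset. -/
theorem stmt_3 {X : Type*} [TopologicalSpace X] [SeparableSpace X]
    (hhom : ∀ x y : X, ∃ h : X ≃ₜ X, h x = y)
    (hseq : ∃ (x : X) (u : ℕ → X), (∀ n, u n ≠ x) ∧ Tendsto u atTop (𝓝 x)) :
    ∃ D : Set X, D.Countable ∧ Dense D ∧
      ∀ d ∈ D, ∃ u : ℕ → X, (∀ n, u n ∈ D ∧ u n ≠ d) ∧ Tendsto u atTop (𝓝 d) := by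
  obtain ⟨x, u, hu_ne, hu_lim⟩ := hseq
  have key : ∀ y : X, ∃ v : ℕ → X, (∀ n, v n ≠ y) ∧ Tendsto v atTop (𝓝 y) := by
    intro y
    obtain ⟨h, hh⟩ := hhom x y
    refine ⟨fun n => h (u n), fun n hn => hu_ne n (h.injective (hn.trans hh.symm)), ?_⟩
    have := (h.continuous.tendsto x).comp hu_lim
    rwa [hh] at this
  choose f hf_ne hf_lim using key
  obtain ⟨C, hCc, hCd⟩ := exists_countable_dense X
  let Ds : ℕ → Set X := fun n => Nat.rec C (fun _ s => s ∪ ⋃ d ∈ s, Set.range (f d)) n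
  have hDs_count : ∀ n, (Ds n).Countable := by
    intro n
    induction n with
    | zero => exact hCc
    | succ n ih => exact ih.union (ih.biUnion (fun d _ => Set.countable_range _))
  refine ⟨⋃ n, Ds n, Set.countable_iUnion hDs_count, hCd.mono (Set.subset_iUnion Ds 0), ?_⟩
  rintro d hd
  obtain ⟨n, hn⟩ := Set.mem_iUnion.mp hd
  refine ⟨f d, fun m => ⟨?_, hf_ne d m⟩, hf_lim d⟩
  exact Set.mem_iUnion.mpr ⟨n+1, Or.inr (Set.mem_biUnion hn (Set.mem_range_self m))⟩
end

section
/- Let X be a topological space that is meager in itself, contains a copy of the Cantor set, and contains a sequentially crowded countable dense subset. Then X is not countable dense homogeneous. -/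
open Filter Topology TopologicalSpace


open Set Filter Topology TopologicalSpace
open scoped Classical

namespace CDHAux

variable (c : ℕ → ℕ → Bool)

/-- One step of the Ramsey construction. -/
noncomputable def rStep (S : Set ℕ) (hS : S.Infinite) : Set ℕ × ℕ × Bool :=
  if {m ∈ S | hS.nonempty.choose < m ∧ c hS.nonempty.choose m = true}.Infinite
  then ({m ∈ S | hS.nonempty.choose < m ∧ c hS.nonempty.choose m = true}, hS.nonempty.choose, true)
  else ({m ∈ S | hS.nonempty.choose < m ∧ c hS.nonempty.choose m = false}, hS.nonempty.choose, false)

theorem rStep_spec (S : Set ℕ) (hS : S.Infinite) :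
    (rStep c S hS).1.Infinite ∧ (rStep c S hS).2.1 ∈ S ∧ (rStep c S hS).1 ⊆ S ∧
      ∀ m ∈ (rStep c S hS).1,
        (rStep c S hS).2.1 < m ∧ c (rStep c S hS).2.1 m = (rStep c S hS).2.2 := by
  have ha : hS.nonempty.choose ∈ S := hS.nonempty.choose_spec
  set a := hS.nonempty.choose with haa
  have hbig : {m ∈ S | a < m}.Infinite := by
    have : S \ Iic a ⊆ {m ∈ S | a < m} := by
      intro m hm
      exact ⟨hm.1, by simpa using hm.2⟩
    exact (hS.diff (finite_Iic a)).mono this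
  unfold rStep
  rw [← haa]
  split_ifs with h
  · exact ⟨h, ha, fun m hm => hm.1, fun m hm => ⟨hm.2.1, hm.2.2⟩⟩
  · have hf : {m ∈ S | a < m ∧ c a m = false}.Infinite := by
      by_contra hcon
      rw [not_infinite] at hcon
      have hT : Set.Finite {m ∈ S | a < m ∧ c a m = true} := by
        rwa [not_infinite] at h
      have : {m ∈ S | a < m} ⊆
          {m ∈ S | a < m ∧ c a m = true} ∪ {m ∈ S | a < m ∧ c a m = false} := by
        intro m hm
        rcases Bool.eq_false_or_eq_true (c a m) with hb | hb
        · exact Or.inl ⟨hm.1, hm.2, hb⟩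
        · exact Or.inr ⟨hm.1, hm.2, hb⟩
      exact hbig (Finite.subset (hT.union hcon) this)
    exact ⟨hf, ha, fun m hm => hm.1, fun m hm => ⟨hm.2.1, hm.2.2⟩⟩

/-- The decreasing sequence of infinite sets. -/
noncomputable def rSets : ℕ → {S : Set ℕ // S.Infinite}
  | 0 => ⟨univ, infinite_univ⟩
  | n + 1 => ⟨(rStep c (rSets n).1 (rSets n).2).1, (rStep_spec c (rSets n).1 (rSets n).2).1⟩

/-- Selected elements. -/
noncomputable def rA (n : ℕ) : ℕ := (rStep c (rSets c n).1 (rSets c n).2).2.1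

/-- Selected colors. -/
noncomputable def rB (n : ℕ) : Bool := (rStep c (rSets c n).1 (rSets c n).2).2.2

theorem rSets_succ_subset (n : ℕ) : (rSets c (n + 1)).1 ⊆ (rSets c n).1 :=
  (rStep_spec c (rSets c n).1 (rSets c n).2).2.2.1

theorem rSets_subset {n m : ℕ} (h : n ≤ m) : (rSets c m).1 ⊆ (rSets c n).1 := by
  induction m with
  | zero => simp_all
  | succ k ih =>
    rcases Nat.lt_or_ge n (k+1) with hlt | hge
    · exact (rSets_succ_subset c k).trans (ih (Nat.lt_succ_iff.mp hlt))
    · have : n = k + 1 := le_antisymm h hge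
      subst this; rfl

theorem rA_mem (n : ℕ) : rA c n ∈ (rSets c n).1 :=
  (rStep_spec c (rSets c n).1 (rSets c n).2).2.1

theorem rA_spec {n m : ℕ} (h : n < m) :
    rA c n < rA c m ∧ c (rA c n) (rA c m) = rB c n := by
  have h1 : rA c m ∈ (rSets c (n+1)).1 :=
    rSets_subset c h (rA_mem c m)
  exact (rStep_spec c (rSets c n).1 (rSets c n).2).2.2.2 _ h1

/-- Infinite Ramsey theorem for pairs and two colours, in sequence form. -/
theorem ramsey_two : ∃ (b : Bool) (A : ℕ → ℕ), StrictMono A ∧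
    ∀ n m, n < m → c (A n) (A m) = b := by
  have hmono : StrictMono (rA c) := strictMono_nat_of_lt_succ fun n => (rA_spec c (Nat.lt_succ_self n)).1
  have hpigeon : ∃ b : Bool, {n | rB c n = b}.Infinite := by
    by_contra hcon
    push_neg at hcon
    have h1 : {n | rB c n = true}.Finite := hcon true
    have h2 : {n | rB c n = false}.Finite := hcon false
    have : (univ : Set ℕ) ⊆ {n | rB c n = true} ∪ {n | rB c n = false} := by
      intro n _
      rcases Bool.eq_false_or_eq_true (rB c n) with hb | hb
      · exact Or.inl hb
      · exact Or.inr hb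
    exact infinite_univ (Finite.subset (h1.union h2) this)
  obtain ⟨b, hb⟩ := hpigeon
  refine ⟨b, fun k => rA c (Nat.nth (fun n => rB c n = b) k), ?_, ?_⟩
  · exact hmono.comp (Nat.nth_strictMono hb)
  · intro n m hnm
    have h1 : Nat.nth (fun n => rB c n = b) n < Nat.nth (fun n => rB c n = b) m :=
      Nat.nth_strictMono hb hnm
    have h2 := (rA_spec c h1).2
    rw [h2]
    exact Nat.nth_mem_of_infinite hb n


variable {X : Type*} [TopologicalSpace X]

/-- Every point of `P` is in the closure of the rest of `P`. -/
def Crowded (P : Set X) : Prop := ∀ p ∈ P, p ∈ closure (P \ {p})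

/-- Points of `P` can be separated by open sets disjoint on `P`. -/
def SubT2 (P : Set X) : Prop := ∀ p ∈ P, ∀ q ∈ P, p ≠ q →
  ∃ A B : Set X, IsOpen A ∧ IsOpen B ∧ p ∈ A ∧ q ∈ B ∧ A ∩ B ∩ P = ∅

/-- No infinite subset of `N` is simultaneously crowded and relatively Hausdorff. -/
def Nice (N : Set X) : Prop := ∀ P ⊆ N, P.Infinite → ¬ (Crowded P ∧ SubT2 P)

theorem nice_of_subsingleton {N : Set X} (h : N.Subsingleton) : Nice N := by
  intro P hPN hPinf _
  exact hPinf (h.anti hPN).finite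

/-- Two distinct elements of an infinite set. -/
theorem Set.Infinite.exists_pair {P : Set X} (h : P.Infinite) :
    ∃ p ∈ P, ∃ q ∈ P, p ≠ q := by
  obtain ⟨p, hp⟩ := h.nonempty
  obtain ⟨q, hq⟩ := (h.diff (finite_singleton p)).nonempty
  exact ⟨p, hp, q, hq.1, fun hc => hq.2 (by simp [hc.symm])⟩

/-- If all pairs in `N` are comparable in the specialization preorder, then `N` is nice. -/
theorem nice_of_comparable {N : Set X}
    (h : ∀ p ∈ N, ∀ q ∈ N, p ≠ q → p ∈ closure {q} ∨ q ∈ closure {p}) : Nice N := by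
  intro P hPN hPinf ⟨_, ht2⟩
  obtain ⟨p, hp, q, hq, hpq⟩ := Set.Infinite.exists_pair hPinf
  rcases h p (hPN hp) q (hPN hq) hpq with hcl | hcl
  · obtain ⟨A, B, hAo, _, hpA, hqB, hABP⟩ := ht2 p hp q hq hpq
    have hqA : q ∈ A := by
      have := mem_closure_iff.mp hcl A hAo hpA
      obtain ⟨y, hy1, hy2⟩ := this
      rwa [mem_singleton_iff.mp hy2] at hy1
    have hfin : q ∈ A ∩ B ∩ P := ⟨⟨hqA, hqB⟩, hq⟩
    rw [hABP] at hfin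
    exact hfin
  · obtain ⟨A, B, hAo, _, hqA, hpB, hABP⟩ := ht2 q hq p hp hpq.symm
    have hpA : p ∈ A := by
      have := mem_closure_iff.mp hcl A hAo hqA
      obtain ⟨y, hy1, hy2⟩ := this
      rwa [mem_singleton_iff.mp hy2] at hy1
    have hfin : p ∈ A ∩ B ∩ P := ⟨⟨hpA, hpB⟩, hp⟩
    rw [hABP] at hfin
    exact hfin

/-- In every infinite subset of a topological space there is an infinite "nice" subset. -/
theorem exists_nice_subset {R : Set X} (hR : R.Infinite) :
    ∃ N : Set X, N ⊆ R ∧ N.Infinite ∧ Nice N := by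
  obtain f := hR.natEmbedding
  set c : ℕ → ℕ → Bool := fun i j =>
    decide ((f i : X) ∈ closure {(f j : X)} ∨ (f j : X) ∈ closure {(f i : X)}) with hc
  obtain ⟨b, A, hAmono, hApair⟩ := ramsey_two c
  set g : ℕ → X := fun n => (f (A n) : X) with hg
  have hginj : Function.Injective g := by
    intro n m hnm
    exact hAmono.injective (f.injective (Subtype.ext hnm))
  have hgR : range g ⊆ R := by
    rintro x ⟨n, rfl⟩
    exact (f (A n)).2
  have hgInf : (range g).Infinite := infinite_range_of_injective hginj
  cases b with
  | true =>
    refine ⟨range g, hgR, hgInf, nice_of_comparable ?_⟩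
    rintro p ⟨n, rfl⟩ q ⟨m, rfl⟩ hpq
    have hnm : n ≠ m := fun hh => hpq (by rw [hh])
    rcases hnm.lt_or_gt with hlt | hlt
    · have := hApair n m hlt
      rw [hc] at this
      simpa using of_decide_eq_true this
    · have := hApair m n hlt
      rw [hc] at this
      have := of_decide_eq_true this
      simpa using this.symm
  | false =>
    -- pairwise incomparable
    have hinc : ∀ p ∈ range g, ∀ q ∈ range g, p ≠ q → p ∉ closure {q} := by
      rintro p ⟨n, rfl⟩ q ⟨m, rfl⟩ hpq
      have hnm : n ≠ m := fun hh => hpq (by rw [hh])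
      rcases hnm.lt_or_gt with hlt | hlt
      · have := hApair n m hlt
        rw [hc] at this
        have h2 := of_decide_eq_false this
        push_neg at h2
        exact h2.1
      · have := hApair m n hlt
        rw [hc] at this
        have h2 := of_decide_eq_false this
        push_neg at h2
        exact h2.2
    by_cases hα : ∃ N : Set X, N ⊆ range g ∧ N.Infinite ∧
        ∀ x ∈ N, ∀ A : Set X, IsOpen A → x ∈ A → (N \ A).Finite
    · obtain ⟨N, hN1, hN2, hN3⟩ := hα
      refine ⟨N, hN1.trans hgR, hN2, ?_⟩
      intro P hPN hPinf ⟨_, ht2⟩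
      obtain ⟨p, hp, q, hq, hpq⟩ := Set.Infinite.exists_pair hPinf
      obtain ⟨Ao, Bo, hAo, hBo, hpA, hqB, hABP⟩ := ht2 p hp q hq hpq
      have h1 : (P \ Ao).Finite := ((hN3 p (hPN hp) Ao hAo hpA).subset (diff_subset_diff_left hPN))
      have h2 : (P \ Bo).Finite := ((hN3 q (hPN hq) Bo hBo hqB).subset (diff_subset_diff_left hPN))
      have : P ⊆ (P \ Ao) ∪ (P \ Bo) := by
        intro x hx
        by_cases hxA : x ∈ Ao
        · by_cases hxB : x ∈ Bo
          · exact absurd (show x ∈ Ao ∩ Bo ∩ P from ⟨⟨hxA, hxB⟩, hx⟩) (by rw [hABP]; simp)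
          · exact Or.inr ⟨hx, hxB⟩
        · exact Or.inl ⟨hx, hxA⟩
      exact hPinf ((h1.union h2).subset this)
    · push_neg at hα
      have hβ : ∀ S : Set X, S ⊆ range g → S.Infinite →
          ∃ x ∈ S, ∃ A : Set X, IsOpen A ∧ x ∈ A ∧ (S \ A).Infinite := by
        intro S hS1 hS2
        obtain ⟨x, hx, A0, hA1, hA2, hA3⟩ := hα S hS1 hS2
        exact ⟨x, hx, A0, hA1, hA2, hA3⟩
      -- recursive construction
      let step : {S : Set X // S ⊆ range g ∧ S.Infinite} → {S : Set X // S ⊆ range g ∧ S.Infinite} × X × Set X :=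
        fun S =>
          let w := hβ S.1 S.2.1 S.2.2
          (⟨S.1 \ w.choose_spec.2.choose,
            (diff_subset.trans S.2.1),
            w.choose_spec.2.choose_spec.2.2⟩, w.choose, w.choose_spec.2.choose)
      let T : ℕ → {S : Set X // S ⊆ range g ∧ S.Infinite} :=
        fun n => Nat.rec ⟨range g, subset_rfl, hgInf⟩ (fun _ prev => (step prev).1) n
      set xs : ℕ → X := fun n => (step (T n)).2.1 with hxs
      set As : ℕ → Set X := fun n => (step (T n)).2.2 with hAs
      have hstep : ∀ n, xs n ∈ (T n).1 ∧ IsOpen (As n) ∧ xs n ∈ As n ∧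
          (T (n+1)).1 = (T n).1 \ As n := by
        intro n
        have hw := (hβ (T n).1 (T n).2.1 (T n).2.2).choose_spec
        exact ⟨hw.1, hw.2.choose_spec.1, hw.2.choose_spec.2.1, rfl⟩
      have hTsub : ∀ n m, n ≤ m → (T m).1 ⊆ (T n).1 := by
        intro n m h
        induction m with
        | zero => simp_all
        | succ k ih =>
          rcases Nat.lt_or_ge n (k+1) with hlt | hge
          · refine subset_trans ?_ (ih (Nat.lt_succ_iff.mp hlt))
            rw [(hstep k).2.2.2]
            exact diff_subset
          · have : n = k + 1 := le_antisymm h hge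
            subst this; rfl
      have hxsT : ∀ n, xs n ∈ (T n).1 := fun n => (hstep n).1
      have hnotin : ∀ n m, n < m → xs m ∉ As n := by
        intro n m hlt
        have h1 : xs m ∈ (T (n+1)).1 := hTsub (n+1) m hlt (hxsT m)
        rw [(hstep n).2.2.2] at h1
        exact h1.2
      have hxsinj : Function.Injective xs := by
        intro n m hnm
        by_contra hne
        rcases (Ne.lt_or_gt hne) with hlt | hlt
        · exact hnotin n m hlt (hnm ▸ (hstep n).2.2.1)
        · exact hnotin m n hlt (hnm ▸ (hstep m).2.2.1)
      have hxsrange : range xs ⊆ range g := fun x ⟨n, hn⟩ => hn ▸ (T n).2.1 (hxsT n)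
      refine ⟨range xs, hxsrange.trans hgR, infinite_range_of_injective hxsinj, ?_⟩
      intro P hPN hPinf ⟨hcr, _⟩
      obtain ⟨p, hp⟩ := hPinf.nonempty
      obtain ⟨n, rfl⟩ := hPN hp
      -- build an open set isolating `xs n` in `P`
      set U : Set X := As n ∩ ⋂ i ∈ Finset.range n, (closure {xs i})ᶜ with hU
      have hUo : IsOpen U := by
        refine ((hstep n).2.1).inter ?_
        exact isOpen_biInter_finset fun i _ => isClosed_closure.isOpen_compl
      have hpU : xs n ∈ U := by
        refine ⟨(hstep n).2.2.1, ?_⟩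
        simp only [mem_iInter, mem_compl_iff]
        intro i hi
        have hin : i < n := Finset.mem_range.mp hi
        have hne : xs n ≠ xs i := fun hh => Nat.ne_of_gt hin (hxsinj hh)
        exact hinc (xs n) (hxsrange ⟨n, rfl⟩) (xs i) (hxsrange ⟨i, rfl⟩) hne
      have hUdisj : U ∩ (P \ {xs n}) = ∅ := by
        rw [eq_empty_iff_forall_notMem]
        rintro y ⟨hyU, hyP, hyne⟩
        obtain ⟨m, rfl⟩ := hPN hyP
        have hmn : m ≠ n := fun hh => hyne (by rw [hh]; exact mem_singleton _)
        rcases hmn.lt_or_gt with hlt | hlt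
        · have : xs m ∈ (⋂ i ∈ Finset.range n, (closure {xs i})ᶜ) := hyU.2
          simp only [mem_iInter, mem_compl_iff] at this
          exact this m (Finset.mem_range.mpr hlt) (subset_closure rfl)
        · exact hnotin n m hlt hyU.1
      have := mem_closure_iff.mp (hcr (xs n) hp) U hUo hpU
      obtain ⟨y, hy1, hy2⟩ := this
      rw [eq_empty_iff_forall_notMem] at hUdisj
      exact hUdisj y ⟨hy1, hy2⟩



theorem interior_union_empty {A B : Set X} (hA : IsClosed A) (hiA : interior A = ∅)
    (hiB : interior B = ∅) : interior (A ∪ B) = ∅ := by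
  have h1 : interior (A ∪ B) ∩ Aᶜ ⊆ interior B := by
    apply interior_maximal
    · intro x hx
      rcases (interior_subset hx.1 : x ∈ A ∪ B) with h | h
      · exact absurd h hx.2
      · exact h
    · exact isOpen_interior.inter hA.isOpen_compl
  rw [hiB, subset_empty_iff, ← disjoint_iff_inter_eq_empty, disjoint_compl_right_iff_subset] at h1
  have h2 : interior (A ∪ B) ⊆ interior A := interior_maximal h1 isOpen_interior
  rw [hiA, subset_empty_iff] at h2
  exact h2


theorem interior_finset_biUnion_empty {ι : Type*} (s : Finset ι) (f : ι → Set X)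
    (hc : ∀ i ∈ s, IsClosed (f i)) (hi : ∀ i ∈ s, interior (f i) = ∅) :
    interior (⋃ i ∈ s, f i) = ∅ := by
  induction s using Finset.induction_on with
  | empty => simp
  | @insert a t ha ih =>
    rw [Finset.set_biUnion_insert]
    refine interior_union_empty (hc _ (Finset.mem_insert_self _ _))
      (hi _ (Finset.mem_insert_self _ _)) ?_
    exact ih (fun i hh => hc _ (Finset.mem_insert_of_mem hh))
      (fun i hh => hi _ (Finset.mem_insert_of_mem hh))

theorem meagre_decomposition (h : IsMeagre (univ : Set X)) :
    ∃ F : ℕ → Set X, (∀ n, IsClosed (F n)) ∧ (∀ n, interior (F n) = ∅) ∧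
      Monotone F ∧ (⋃ n, F n) = univ := by
  obtain ⟨S, hS1, hS2, hS3⟩ := isMeagre_iff_countable_union_isNowhereDense.mp h
  have hT1 : ∀ t ∈ insert (∅ : Set X) S, IsNowhereDense t := by
    intro t ht
    rcases ht with rfl | ht
    · exact isNowhereDense_empty
    · exact hS1 t ht
  have hTc : (insert (∅ : Set X) S).Countable := hS2.insert ∅
  obtain ⟨f, hf⟩ := hTc.exists_eq_range (insert_nonempty _ _)
  refine ⟨fun n => ⋃ i ∈ Finset.range (n + 1), closure (f i), ?_, ?_, ?_, ?_⟩
  · intro n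
    exact isClosed_biUnion_finset fun i _ => isClosed_closure
  · intro n
    induction n with
    | zero =>
      show interior (⋃ i ∈ Finset.range (0 + 1), closure (f i)) = ∅
      simpa [IsNowhereDense] using (hT1 (f 0) (hf ▸ mem_range_self 0))
    | succ k ih =>
      show interior (⋃ i ∈ Finset.range (k + 1 + 1), closure (f i)) = ∅
      have hrw : (⋃ i ∈ Finset.range (k + 1 + 1), closure (f i)) =
          (⋃ i ∈ Finset.range (k + 1), closure (f i)) ∪ closure (f (k + 1)) := by
        rw [Finset.range_add_one]
        rw [Finset.set_biUnion_insert]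
        rw [union_comm]
      rw [hrw]
      refine interior_union_empty (isClosed_biUnion_finset fun i _ => isClosed_closure) ih ?_
      exact hT1 (f (k + 1)) (hf ▸ mem_range_self (k + 1))
  · intro n m hnm
    intro x hx
    rw [mem_iUnion₂] at hx ⊢
    obtain ⟨i, hi, hxi⟩ := hx
    exact ⟨i, Finset.mem_range.mpr (by have := Finset.mem_range.mp hi; omega), hxi⟩
  · rw [eq_univ_iff_forall]
    intro x
    have : x ∈ ⋃₀ S := hS3 (mem_univ x)
    obtain ⟨t, ht, hxt⟩ := this
    have : t ∈ range f := hf ▸ mem_insert_of_mem _ ht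
    obtain ⟨i, rfl⟩ := this
    refine mem_iUnion.mpr ⟨i, ?_⟩
    exact mem_biUnion (Finset.self_mem_range_succ i) (subset_closure hxt)

theorem crowded_image {Y Z : Type*} [TopologicalSpace Y] [TopologicalSpace Z]
    {f : Y → Z} (hf : Continuous f) (hinj : Function.Injective f) {P : Set Y}
    (h : ∀ p ∈ P, p ∈ closure (P \ {p})) :
    ∀ q ∈ f '' P, q ∈ closure (f '' P \ {q}) := by
  rintro q ⟨p, hp, rfl⟩
  have h1 : f p ∈ f '' closure (P \ {p}) := mem_image_of_mem f (h p hp)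
  have h2 : f '' closure (P \ {p}) ⊆ closure (f '' (P \ {p})) :=
    image_closure_subset_closure_image hf
  have h3 : f '' (P \ {p}) = f '' P \ {f p} := by
    rw [image_diff hinj, image_singleton]
  rw [h3] at h2
  exact h2 h1

theorem subT2_image {Y Z : Type*} [TopologicalSpace Y] [TopologicalSpace Z]
    {f : Y → Z} (hlift : ∀ U : Set Y, IsOpen U → ∃ V : Set Z, IsOpen V ∧ f ⁻¹' V = U)
    {P : Set Y}
    (h : ∀ p ∈ P, ∀ q ∈ P, p ≠ q →
      ∃ A B : Set Y, IsOpen A ∧ IsOpen B ∧ p ∈ A ∧ q ∈ B ∧ A ∩ B ∩ P = ∅)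
    (hinj : Function.Injective f) :
    ∀ p ∈ f '' P, ∀ q ∈ f '' P, p ≠ q →
      ∃ A B : Set Z, IsOpen A ∧ IsOpen B ∧ p ∈ A ∧ q ∈ B ∧ A ∩ B ∩ (f '' P) = ∅ := by
  rintro p' ⟨p, hp, rfl⟩ q' ⟨q, hq, rfl⟩ hne
  have hpq : p ≠ q := fun hh => hne (by rw [hh])
  obtain ⟨A, B, hAo, hBo, hpA, hqB, hABP⟩ := h p hp q hq hpq
  obtain ⟨A', hA'o, hA'⟩ := hlift A hAo
  obtain ⟨B', hB'o, hB'⟩ := hlift B hBo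
  refine ⟨A', B', hA'o, hB'o, ?_, ?_, ?_⟩
  · rw [← mem_preimage, hA']; exact hpA
  · rw [← mem_preimage, hB']; exact hqB
  · rw [eq_empty_iff_forall_notMem]
    rintro z ⟨⟨hzA, hzB⟩, ⟨y, hy, rfl⟩⟩
    have : y ∈ A ∩ B ∩ P := by
      refine ⟨⟨?_, ?_⟩, hy⟩
      · rw [← hA']; exact hzA
      · rw [← hB']; exact hzB
    rw [hABP] at this
    exact this

theorem crowded_infinite {Y : Type*} [TopologicalSpace Y] [T1Space Y] {P : Set Y}
    (hne : P.Nonempty) (hcr : ∀ p ∈ P, p ∈ closure (P \ {p})) : P.Infinite := by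
  by_contra hcon
  rw [Set.not_infinite] at hcon
  obtain ⟨p, hp⟩ := hne
  have h1 : IsClosed (P \ {p}) := hcon.diff.isClosed
  have h2 := hcr p hp
  rw [h1.closure_eq] at h2
  exact h2.2 (mem_singleton _)

/-- The Cantor space has no isolated points. -/
theorem cantor_perfect (x : ℕ → Bool) (W : Set (ℕ → Bool)) (hW : IsOpen W) (hx : x ∈ W) :
    ∃ y ∈ W, y ≠ x := by
  obtain ⟨I, u, hu, hsub⟩ := isOpen_pi_iff.mp hW x hx
  obtain ⟨m, hm⟩ := Infinite.exists_notMem_finset I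
  refine ⟨Function.update x m (!(x m)), ?_, ?_⟩
  · apply hsub
    intro i hi
    rw [Function.update_of_ne (show i ≠ m from fun hh => hm (hh ▸ hi)) _ x]
    exact (hu i hi).2
  · intro hh
    have := congrFun hh m
    rw [Function.update_self] at this
    exact (Bool.not_ne_self (x m)) this



theorem exists_row
    (hcdh : ∀ D D' : Set X, D.Countable → Dense D → D'.Countable → Dense D' →
      ∃ h : X ≃ₜ X, h '' D = D')
    {D : Set X} (hDc : D.Countable) (hDd : Dense D)
    (hcrowded : ∀ d ∈ D, ∃ u : ℕ → X, (∀ n, u n ∈ D ∧ u n ≠ d) ∧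
      Tendsto u atTop (𝓝 d))
    {d : X} (hd : d ∈ D) {Fj : Set X} (hFc : IsClosed Fj) (hFi : interior Fj = ∅) :
    ∃ N : Set X, N.Countable ∧ N ⊆ D ∧ N ∩ Fj = ∅ ∧ Nice N ∧
      ∀ W ∈ 𝓝 d, (N ∩ W).Nonempty := by
  have hFcompl : Dense (Fjᶜ) := by
    rwa [interior_eq_empty_iff_dense_compl] at hFi
  have hDFd : Dense (D ∩ Fjᶜ) := hDd.inter_of_isOpen_right hFcompl hFc.isOpen_compl
  set B : Set X := (D ∩ Fjᶜ) ∪ {d} with hB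
  have hBd : Dense B := hDFd.mono subset_union_left
  have hBc : B.Countable := ((hDc.mono inter_subset_left).union (countable_singleton d))
  obtain ⟨hom, hhom⟩ := hcdh D B hDc hDd hBc hBd
  have hdB : d ∈ B := Or.inr rfl
  rw [← hhom] at hdB
  obtain ⟨d₀, hd₀, hde⟩ := hdB
  obtain ⟨u₀, hu₀, hu₀t⟩ := hcrowded d₀ hd₀
  set u : ℕ → X := fun n => hom (u₀ n) with hu
  have hu1 : ∀ n, u n ∈ D ∩ Fjᶜ := by
    intro n
    have h1 : u n ∈ B := by
      rw [← hhom]; exact mem_image_of_mem _ (hu₀ n).1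
    have h2 : u n ≠ d := by
      rw [← hde]
      exact fun hh => (hu₀ n).2 (hom.injective hh)
    rcases h1 with h | h
    · exact h
    · exact absurd h h2
  have hut : Tendsto u atTop (𝓝 d) := by
    rw [← hde]
    exact (hom.continuous.tendsto d₀).comp hu₀t
  by_cases hfin : (range u).Finite
  · have hfib : ∃ x, {n | u n = x}.Infinite := by
      by_contra hcon
      push_neg at hcon
      have hcov : (univ : Set ℕ) ⊆ ⋃ x ∈ range u, {n | u n = x} := by
        intro n _
        exact mem_biUnion (mem_range_self n) rfl
      have hfin2 : (⋃ x ∈ range u, {n | u n = x}).Finite := by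
        refine hfin.biUnion ?_
        intro x _
        have := hcon x
        exact this
      exact infinite_univ (hfin2.subset hcov)
    obtain ⟨x, hx⟩ := hfib
    have hxD : x ∈ D ∩ Fjᶜ := by
      obtain ⟨n, hn⟩ := hx.nonempty
      rw [← hn]
      exact hu1 n
    refine ⟨{x}, countable_singleton x, singleton_subset_iff.mpr hxD.1, ?_,
      nice_of_subsingleton subsingleton_singleton, ?_⟩
    · rw [singleton_inter_eq_empty]
      exact hxD.2
    · intro W hW
      have hev := hut.eventually_mem hW
      rw [eventually_atTop] at hev
      obtain ⟨n₀, hn₀⟩ := hev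
      obtain ⟨m, hm1, hm2⟩ := hx.exists_gt n₀
      refine ⟨x, mem_singleton x, ?_⟩
      rw [← show u m = x from hm1]
      exact hn₀ m hm2.le
  · have hRinf : (range u).Infinite := by rwa [← Set.not_infinite, not_not] at hfin
    obtain ⟨N, hNsub, hNinf, hNnice⟩ := exists_nice_subset hRinf
    have hND : N ⊆ D ∩ Fjᶜ := by
      intro y hy
      obtain ⟨n, hn⟩ := hNsub hy
      rw [← hn]
      exact hu1 n
    refine ⟨N, (countable_range u).mono hNsub, hND.trans inter_subset_left, ?_, hNnice, ?_⟩
    · rw [eq_empty_iff_forall_notMem]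
      rintro y ⟨hy1, hy2⟩
      exact (hND hy1).2 hy2
    · intro W hW
      have hev := hut.eventually_mem hW
      rw [eventually_atTop] at hev
      obtain ⟨n₀, hn₀⟩ := hev
      by_contra hcon
      push_neg at hcon
      rw [eq_empty_iff_forall_notMem] at hcon
      have hsub2 : N ⊆ u '' (Iio n₀) := by
        intro y hy
        obtain ⟨n, hn⟩ := hNsub hy
        by_cases hlt : n < n₀
        · exact ⟨n, hlt, hn⟩
        · exfalso
          exact hcon y ⟨hy, by rw [← hn]; exact hn₀ n (le_of_not_gt hlt)⟩
      exact hNinf (((finite_Iio n₀).image u).subset hsub2)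


end CDHAux


open Filter Topology TopologicalSpace



/-- `X` is countable dense homogeneous: it is separable and every countable dense subset
can be mapped onto every other one by an autohomeomorphism. -/
def CDH (X : Type*) [TopologicalSpace X] : Prop :=
  SeparableSpace X ∧
    ∀ D D' : Set X, D.Countable → Dense D → D'.Countable → Dense D' →
      ∃ h : X ≃ₜ X, h '' D = D'

/-- A space which is meager in itself, contains a copy of the Cantor set, and contains a
sequentially crowded countable dense subset, is not CDH. -/
theorem stmt_5 {X : Type*} [TopologicalSpace X]
    (hmeager : IsMeagre (Set.univ : Set X))
    (C : Set X) (hC : Nonempty (C ≃ₜ (ℕ → Bool)))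
    (D : Set X) (hDc : D.Countable) (hDd : Dense D)
    (hcrowded : ∀ d ∈ D, ∃ u : ℕ → X, (∀ n, u n ∈ D ∧ u n ≠ d) ∧
      Tendsto u atTop (𝓝 d)) :
    ¬ CDH X := by
  classical
  rintro ⟨hsep, hcdh⟩
  obtain ⟨ψ⟩ := hC
  have hXne : Nonempty X := ⟨(ψ.symm (fun _ => false) : C)⟩
  obtain ⟨F, hFc, hFi, hFm, hFu⟩ := CDHAux.meagre_decomposition hmeager
  have hDne : D.Nonempty := hDd.nonempty
  obtain ⟨e, he⟩ := hDc.exists_eq_range hDne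
  -- the rows
  have hrow : ∀ p : ℕ × ℕ, ∃ N : Set X, N.Countable ∧ N ⊆ D ∧
      N ∩ F (max p.1 p.2) = ∅ ∧ CDHAux.Nice N ∧ ∀ W ∈ 𝓝 (e p.1), (N ∩ W).Nonempty := by
    intro p
    have hek : e p.1 ∈ D := by rw [he]; exact Set.mem_range_self p.1
    exact CDHAux.exists_row hcdh hDc hDd hcrowded hek (hFc _) (hFi _)
  choose ρ hρc hρD hρF hρN hρW using hrow
  set G : Set X := ⋃ p : ℕ × ℕ, ρ p with hG
  have hGc : G.Countable := Set.countable_iUnion hρc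
  have hGd : Dense G := by
    rw [dense_iff_inter_open]
    intro U hU hUne
    obtain ⟨x, hxD, hxU⟩ := hDd.exists_mem_open hU hUne
    obtain ⟨k, hk⟩ : x ∈ Set.range e := by rw [← he]; exact hxD
    have hW : U ∈ 𝓝 (e k) := hU.mem_nhds (by rw [hk]; exact hxU)
    obtain ⟨y, hy1, hy2⟩ := hρW (k, 0) U hW
    exact ⟨y, hy2, Set.mem_iUnion.mpr ⟨(k, 0), hy1⟩⟩
  -- trace of G on F n
  have htrace : ∀ n, ∀ x, x ∈ G → x ∈ F n →
      ∃ p ∈ Finset.range n ×ˢ Finset.range n, x ∈ ρ p := by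
    intro n x hxG hxF
    obtain ⟨p, hp⟩ := Set.mem_iUnion.mp hxG
    have hpn : p.1 < n ∧ p.2 < n := by
      by_contra hcon
      have hmax : n ≤ max p.1 p.2 := by omega
      have hmem : x ∈ ρ p ∩ F (max p.1 p.2) := ⟨hp, hFm hmax hxF⟩
      rw [hρF p] at hmem
      exact hmem
    exact ⟨p, Finset.mem_product.mpr
      ⟨Finset.mem_range.mpr hpn.1, Finset.mem_range.mpr hpn.2⟩, hp⟩
  -- countable dense subset of the Cantor set
  obtain ⟨Ehat, hEhatc, hEhatd⟩ := exists_countable_dense (ℕ → Bool)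
  set E : Set X := Subtype.val '' (⇑ψ.symm '' Ehat) with hE
  have hEc : E.Countable := (hEhatc.image _).image _
  have hDEc : (D ∪ E).Countable := hDc.union hEc
  have hDEd : Dense (D ∪ E) := hDd.mono Set.subset_union_left
  obtain ⟨hom, hhom⟩ := hcdh G (D ∪ E) hGc hGd hDEc hDEd
  -- the closed pieces of the Cantor space
  set Ghat : ℕ → Set (ℕ → Bool) := fun n => ⇑ψ '' (Subtype.val ⁻¹' (⇑hom '' F n)) with hGhat
  have hGhatc : ∀ n, IsClosed (Ghat n) := by
    intro n
    have h1 : IsClosed (⇑hom '' F n) := hom.isClosedMap _ (hFc n)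
    have h2 : IsClosed (Subtype.val ⁻¹' (⇑hom '' F n) : Set C) :=
      h1.preimage continuous_subtype_val
    exact ψ.isClosedMap _ h2
  have hGhatu : (⋃ n, Ghat n) = Set.univ := by
    rw [Set.eq_univ_iff_forall]
    intro zhat
    have h1 : hom.symm ((ψ.symm zhat : C) : X) ∈ ⋃ n, F n := by
      rw [hFu]; trivial
    obtain ⟨n, hn⟩ := Set.mem_iUnion.mp h1
    refine Set.mem_iUnion.mpr ⟨n, ⟨ψ.symm zhat, ?_, by simp⟩⟩
    show ((ψ.symm zhat : C) : X) ∈ ⇑hom '' F n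
    exact ⟨hom.symm ((ψ.symm zhat : C) : X), hn, by simp⟩
  -- Baire category in the Cantor space
  have hBaire : ∃ n, (interior (Ghat n)).Nonempty := by
    by_contra hcon
    push_neg at hcon
    have hde : ∀ n, Dense ((Ghat n)ᶜ) := by
      intro n
      rw [← interior_eq_empty_iff_dense_compl]
      exact hcon n
    have hdi : Dense (⋂ n, (Ghat n)ᶜ) :=
      dense_iInter_of_isOpen (fun n => (hGhatc n).isOpen_compl) hde
    rw [← Set.compl_iUnion, hGhatu, Set.compl_univ] at hdi
    exact Set.not_nonempty_empty hdi.nonempty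
  obtain ⟨nstar, hUhatne⟩ := hBaire
  set Uhat : Set (ℕ → Bool) := interior (Ghat nstar) with hUhat
  set I : Finset (ℕ × ℕ) := Finset.range nstar ×ˢ Finset.range nstar with hI
  set Qhat : ℕ × ℕ → Set (ℕ → Bool) :=
    fun p => ⇑ψ '' (Subtype.val ⁻¹' (⇑hom '' ρ p)) with hQhat
  -- the cover of Ehat ∩ Uhat by the finitely many pieces
  have hcover : ∀ xhat ∈ Ehat ∩ Uhat, ∃ p ∈ I, xhat ∈ Qhat p := by
    rintro xhat ⟨hxhatE, hxhatU⟩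
    have hzF : ((ψ.symm xhat : C) : X) ∈ ⇑hom '' F nstar := by
      have h1 : xhat ∈ Ghat nstar := interior_subset hxhatU
      obtain ⟨w, hw, hwe⟩ := h1
      have hwz : w = ψ.symm xhat := by rw [← hwe]; simp
      rw [← hwz]
      exact hw
    have hzE : ((ψ.symm xhat : C) : X) ∈ E := ⟨ψ.symm xhat, ⟨xhat, hxhatE, rfl⟩, rfl⟩
    have hzG : ((ψ.symm xhat : C) : X) ∈ ⇑hom '' G := by
      rw [hhom]; exact Or.inr hzE
    obtain ⟨g, hgG, hge⟩ := hzG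
    have hgF : g ∈ F nstar := by
      obtain ⟨f', hf', hfe⟩ := hzF
      have : g = f' := hom.injective (by rw [hge, hfe])
      rw [this]; exact hf'
    obtain ⟨p, hpI, hgρ⟩ := htrace nstar g hgG hgF
    refine ⟨p, hpI, ⟨ψ.symm xhat, ?_, by simp⟩⟩
    show ((ψ.symm xhat : C) : X) ∈ ⇑hom '' ρ p
    exact ⟨g, hgρ, hge⟩
  -- one piece is somewhere dense
  have hpiece : ∃ p ∈ I, (interior (closure (Ehat ∩ Uhat ∩ Qhat p))).Nonempty := by
    by_contra hcon
    push_neg at hcon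
    have hiu : interior (⋃ p ∈ I, closure (Ehat ∩ Uhat ∩ Qhat p)) = ∅ := by
      refine CDHAux.interior_finset_biUnion_empty I _ (fun p _ => isClosed_closure) ?_
      intro p hp
      exact hcon p hp
    have hsub : Uhat ⊆ ⋃ p ∈ I, closure (Ehat ∩ Uhat ∩ Qhat p) := by
      have h1 : Uhat ⊆ closure (Uhat ∩ Ehat) := hEhatd.open_subset_closure_inter isOpen_interior
      intro v hv
      have h2 := h1 hv
      have h3 : Uhat ∩ Ehat ⊆ ⋃ p ∈ I, (Ehat ∩ Uhat ∩ Qhat p) := by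
        rintro y ⟨hyU, hyE⟩
        obtain ⟨p, hp1, hp2⟩ := hcover y ⟨hyE, hyU⟩
        exact Set.mem_biUnion hp1 ⟨⟨hyE, hyU⟩, hp2⟩
      have h4 := (closure_mono h3) h2
      rwa [Finset.closure_biUnion] at h4
    have h5 : Uhat ⊆ interior (⋃ p ∈ I, closure (Ehat ∩ Uhat ∩ Qhat p)) :=
      interior_maximal hsub isOpen_interior
    rw [hiu] at h5
    obtain ⟨v, hv⟩ := hUhatne
    exact (h5 hv).elim
  obtain ⟨pstar, hpI, hVhatne⟩ := hpiece
  set Shat : Set (ℕ → Bool) := Ehat ∩ Uhat ∩ Qhat pstar with hShat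
  set Vhat : Set (ℕ → Bool) := interior (closure Shat) with hVhat
  set Phat : Set (ℕ → Bool) := Shat ∩ Vhat with hPhat
  have hVhatS : Vhat ⊆ closure Shat := interior_subset
  -- Phat is crowded
  have hPhatcr : ∀ p ∈ Phat, p ∈ closure (Phat \ {p}) := by
    rintro p ⟨hpS, hpV⟩
    rw [mem_closure_iff]
    intro W hW hpW
    have hWV : IsOpen (W ∩ Vhat) := hW.inter isOpen_interior
    obtain ⟨y, hyWV, hyne⟩ := CDHAux.cantor_perfect p (W ∩ Vhat) hWV ⟨hpW, hpV⟩
    have hOo : IsOpen ((W ∩ Vhat) \ {p}) := hWV.sdiff isClosed_singleton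
    have hyO : y ∈ (W ∩ Vhat) \ {p} := ⟨hyWV, hyne⟩
    obtain ⟨z, hz1, hz2⟩ := mem_closure_iff.mp (hVhatS hyWV.2) _ hOo hyO
    exact ⟨z, hz1.1.1, ⟨⟨hz2, hz1.1.2⟩, hz1.2⟩⟩
  have hPhatne : Phat.Nonempty := by
    obtain ⟨v, hv⟩ := hVhatne
    obtain ⟨z, hz1, hz2⟩ := mem_closure_iff.mp (hVhatS hv) _ isOpen_interior hv
    exact ⟨z, hz2, hz1⟩
  have hPhatinf : Phat.Infinite := CDHAux.crowded_infinite hPhatne hPhatcr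
  -- transfer everything back to X
  set Θ : (ℕ → Bool) → X := fun a => hom.symm ((ψ.symm a : C) : X) with hΘ
  have hΘcont : Continuous Θ :=
    hom.symm.continuous.comp (continuous_subtype_val.comp ψ.symm.continuous)
  have hΘinj : Function.Injective Θ := by
    intro a b hab
    exact ψ.symm.injective (Subtype.val_injective (hom.symm.injective hab))
  have hΘopen : ∀ U : Set (ℕ → Bool), IsOpen U → ∃ V : Set X, IsOpen V ∧ Θ ⁻¹' V = U := by
    intro U hU
    have hA : IsOpen (⇑ψ ⁻¹' U : Set C) := hU.preimage ψ.continuous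
    obtain ⟨AX, hAXo, hAXe⟩ := isOpen_induced_iff.mp hA
    refine ⟨⇑hom ⁻¹' AX, hAXo.preimage hom.continuous, ?_⟩
    ext xhat
    simp only [Set.mem_preimage, hΘ]
    rw [Homeomorph.apply_symm_apply]
    constructor
    · intro hh
      have h1 : ψ.symm xhat ∈ (Subtype.val ⁻¹' AX : Set C) := hh
      rw [hAXe] at h1
      simpa using h1
    · intro hh
      have h1 : ψ.symm xhat ∈ (⇑ψ ⁻¹' U : Set C) := by simpa using hh
      rw [← hAXe] at h1
      exact h1
  have hsubρ : Θ '' Phat ⊆ ρ pstar := by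
    rintro x ⟨xhat, hxhat, rfl⟩
    have hxhatQ : xhat ∈ Qhat pstar := hxhat.1.2
    obtain ⟨w, hw, hwe⟩ := hxhatQ
    have hwz : w = ψ.symm xhat := by rw [← hwe]; simp
    have hmem : ((ψ.symm xhat : C) : X) ∈ ⇑hom '' ρ pstar := by rw [← hwz]; exact hw
    obtain ⟨r, hr, hre⟩ := hmem
    have : Θ xhat = r := by
      rw [hΘ]
      simp only
      rw [← hre]
      simp
    rw [this]
    exact hr
  have hinf : (Θ '' Phat).Infinite := hPhatinf.image hΘinj.injOn
  have hcr : CDHAux.Crowded (Θ '' Phat) := CDHAux.crowded_image hΘcont hΘinj hPhatcr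
  have ht2 : CDHAux.SubT2 (Θ '' Phat) := by
    have hT2src : ∀ p ∈ Phat, ∀ q ∈ Phat, p ≠ q → ∃ A B : Set (ℕ → Bool),
        IsOpen A ∧ IsOpen B ∧ p ∈ A ∧ q ∈ B ∧ A ∩ B ∩ Phat = ∅ := by
      intro p _ q _ hpq
      obtain ⟨A, B, hA, hB, hpA, hqB, hAB⟩ := t2_separation hpq
      refine ⟨A, B, hA, hB, hpA, hqB, ?_⟩
      have hABe : A ∩ B = ∅ := Set.disjoint_iff_inter_eq_empty.mp hAB
      rw [hABe, Set.empty_inter]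
    exact CDHAux.subT2_image hΘopen hT2src hΘinj
  exact hρN pstar (Θ '' Phat) hsubρ hinf ⟨hcr, ht2⟩
end

section
/- Every countable dense homogeneous topological vector space over ℝ (with T0, hence Tychonoff, topology) is a Baire space. -/
open TopologicalSpace Filter Set Topology

section Helpers
variable {X : Type*} [TopologicalSpace X]

lemma my_interior_union_empty {A B : Set X} (hA : IsClosed A) (hiA : interior A = ∅)
    (hiB : interior B = ∅) : interior (A ∪ B) = ∅ := by
  have h1 : interior (A ∪ B) \ A ⊆ interior B := by
    apply interior_maximal
    · intro x hx
      rcases (interior_subset hx.1 : x ∈ A ∪ B) with h | h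
      · exact absurd h hx.2
      · exact h
    · exact isOpen_interior.sdiff hA
  have h2 : interior (A ∪ B) ⊆ A := by
    intro x hx
    by_contra hxA
    have := h1 ⟨hx, hxA⟩
    rw [hiB] at this
    exact this
  have h3 : interior (A ∪ B) ⊆ interior A := interior_maximal h2 isOpen_interior
  rw [hiA] at h3
  exact eq_empty_iff_forall_notMem.mpr fun x hx => h3 hx

lemma my_dense_diff_closed {S A : Set X} (hS : Dense S) (hA : IsClosed A)
    (hiA : interior A = ∅) : Dense (S \ A) := by
  intro x
  rw [mem_closure_iff]
  intro O hO hxO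
  have hOA : ¬ O ⊆ A := by
    intro hsub
    have : O ⊆ interior A := interior_maximal hsub hO
    rw [hiA] at this
    exact this hxO
  obtain ⟨z, hzO, hzA⟩ := not_subset.mp hOA
  have : ((O \ A) ∩ S).Nonempty := by
    have hod : IsOpen (O \ A) := hO.sdiff hA
    have := hS z
    rw [mem_closure_iff] at this
    exact this (O \ A) hod ⟨hzO, hzA⟩
  obtain ⟨s, ⟨hsO, hsA⟩, hsS⟩ := this
  exact ⟨s, hsO, hsS, hsA⟩

lemma my_not_mem_closure_seq [T2Space X] {u : ℕ → X} {d : X}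
    (hu : Tendsto u atTop (𝓝 d)) {A : Set X} (hA : A ⊆ range u) {x : X}
    (hx : x ∉ insert d A) : x ∉ closure A := by
  have hxd : x ≠ d := fun h => hx (h ▸ mem_insert _ _)
  have hxA : x ∉ A := fun h => hx (mem_insert_of_mem _ h)
  obtain ⟨G₀, H, hG₀, hH, hxG₀, hdH, hdisj⟩ := t2_separation hxd
  obtain ⟨J, hJ⟩ := eventually_atTop.mp (hu.eventually (hH.mem_nhds hdH))
  set F : Set X := u '' {j | j < J} with hF
  have hFfin : F.Finite := (Set.finite_Iio J).image u
  have hFcl : IsClosed (F \ {x}) := (hFfin.subset diff_subset).isClosed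
  intro hclo
  rw [mem_closure_iff] at hclo
  have hGop : IsOpen (G₀ \ (F \ {x})) := hG₀.sdiff hFcl
  have hxG : x ∈ G₀ \ (F \ {x}) := ⟨hxG₀, fun h => h.2 rfl⟩
  obtain ⟨z, ⟨hzG₀, hzF⟩, hzA⟩ := hclo _ hGop hxG
  obtain ⟨j, rfl⟩ := hA hzA
  rcases lt_or_ge j J with hj | hj
  · exact hzF ⟨mem_image_of_mem u hj, fun h => hxA (h ▸ hzA)⟩
  · have : u j ∈ H := hJ j hj
    exact (disjoint_left.mp hdisj hzG₀) this

end Helpers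

/-- Every CDH topological vector space over `ℝ` is a Baire space. -/
theorem stmt_7 {E : Type*} [AddCommGroup E] [Module ℝ E] [TopologicalSpace E]
    [IsTopologicalAddGroup E] [ContinuousSMul ℝ E] [T0Space E]
    (hcdh : CDH E) :
    BaireSpace E := by
  obtain ⟨hsep, hhom⟩ := hcdh
  by_contra hB
  rcases subsingleton_or_nontrivial E with hsub | hnt
  · -- subsingleton case: Baire trivially
    refine hB ⟨fun f ho hd => ?_⟩
    have h0 : ∀ n, (0 : E) ∈ f n := by
      intro n
      obtain ⟨x, hx⟩ := (hd n).nonempty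
      rwa [Subsingleton.elim x (0 : E)] at hx
    intro x
    have : x ∈ ⋂ n, f n := mem_iInter.mpr fun n => by
      rw [Subsingleton.elim x (0 : E)]; exact h0 n
    exact subset_closure this
  -- Nontrivial case
  obtain ⟨v, hv⟩ : ∃ v : E, v ≠ 0 := exists_ne 0
  -- smul injectivity on the line
  have hinj : ∀ {s t : ℝ}, s • v = t • v → s = t := by
    intro s t h
    by_contra hne
    have h0 : (s - t) • v = 0 := by rw [sub_smul, h, sub_self]
    rcases smul_eq_zero.mp h0 with h1 | h2
    · exact hne (sub_eq_zero.mp h1)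
    · exact hv h2
  -- countable dense set as a range
  obtain ⟨D₀, hD₀c, hD₀d⟩ := TopologicalSpace.exists_countable_dense E
  obtain ⟨e, rfl⟩ := Set.Countable.exists_eq_range hD₀c hD₀d.nonempty
  -- non-Baire data
  have hni : ¬ ∀ f : ℕ → Set E, (∀ n, IsOpen (f n)) → (∀ n, Dense (f n)) →
      Dense (⋂ n, f n) := fun h => hB ⟨h⟩
  push_neg at hni
  obtain ⟨f, hfo, hfd, hfnd⟩ := hni
  obtain ⟨u₀, hu₀⟩ : ∃ x : E, x ∉ closure (⋂ n, f n) := by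
    by_contra hc
    push_neg at hc
    exact hfnd hc
  set U : Set E := (closure (⋂ n, f n))ᶜ with hUdef
  have hUop : IsOpen U := isOpen_compl_iff.mpr isClosed_closure
  have hu₀U : u₀ ∈ U := hu₀
  -- the closed nowhere dense pieces
  set G : ℕ → Set E :=
    fun m => (Homeomorph.addRight (u₀ - e m.unpair.1)) ⁻¹' (f m.unpair.2)ᶜ with hGdef
  have hGcl : ∀ m, IsClosed (G m) := by
    intro m
    exact (isClosed_compl_iff.mpr (hfo _)).preimage (Homeomorph.continuous _)
  have hGint : ∀ m, interior (G m) = ∅ := by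
    intro m
    rw [hGdef]
    rw [← Homeomorph.preimage_interior, interior_compl, (hfd _).closure_eq, compl_univ,
      Set.preimage_empty]
  -- increasing closed nwd cover
  set N : ℕ → Set E := fun n => Nat.rec (G 0) (fun k Nk => Nk ∪ G (k + 1)) n with hNdef
  have hNsucc : ∀ n, N (n + 1) = N n ∪ G (n + 1) := fun n => rfl
  have hNcl : ∀ n, IsClosed (N n) := by
    intro n
    induction n with
    | zero => exact hGcl 0
    | succ k ih => rw [hNsucc]; exact ih.union (hGcl (k + 1))
  have hNint : ∀ n, interior (N n) = ∅ := by
    intro n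
    induction n with
    | zero => exact hGint 0
    | succ k ih => rw [hNsucc]; exact my_interior_union_empty (hNcl k) ih (hGint (k + 1))
  have hNmono : Monotone N := by
    apply monotone_nat_of_le_succ
    intro n
    rw [hNsucc]
    exact subset_union_left
  have hGN : ∀ m, G m ⊆ N m := by
    intro m
    cases m with
    | zero => exact subset_rfl
    | succ k => rw [hNsucc]; exact subset_union_right
  have hcap : ∀ u ∈ U, ∃ m, u ∉ f m := by
    intro u hu
    have : u ∉ ⋂ n, f n := fun hmem => hu (subset_closure hmem)
    simpa using this
  have hGcov : ∀ x : E, ∃ m, x ∈ G m := by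
    intro x
    set ψ : E ≃ₜ E := (Homeomorph.neg E).trans (Homeomorph.addLeft (x + u₀)) with hψ
    have hψu : ∀ u : E, ψ u = (x + u₀) + -u := fun u => rfl
    have hOop : IsOpen (ψ '' U) := (Homeomorph.isOpen_image ψ).mpr hUop
    have hxO : x ∈ ψ '' U := ⟨u₀, hu₀U, by rw [hψu]; abel⟩
    obtain ⟨d, hd, hdO⟩ := hD₀d.exists_mem_open hOop ⟨x, hxO⟩
    obtain ⟨i, rfl⟩ := hd
    obtain ⟨u, huU, hue⟩ := hdO
    obtain ⟨m, hum⟩ := hcap u huU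
    refine ⟨Nat.pair i m, ?_⟩
    rw [hGdef]
    simp only [Set.mem_preimage, Nat.unpair_pair]
    have heq : (Homeomorph.addRight (u₀ - e i)) x = u := by
      have h2 := hue
      rw [hψu] at h2
      rw [show (Homeomorph.addRight (u₀ - e i)) x = x + (u₀ - e i) from rfl, ← h2]
      abel
    rw [heq]
    exact hum
  have hNcov : ∀ x : E, ∃ n, x ∈ N n := by
    intro x
    obtain ⟨m, hm⟩ := hGcov x
    exact ⟨m, hGN m hm⟩
  -- the segment and its rational points
  set K : Set E := (fun t : ℝ => t • v) '' (Set.Icc 0 1) with hKdef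
  set Qs : Set E := (fun q : ℚ => (q : ℝ) • v) '' {q : ℚ | 0 ≤ q ∧ q ≤ 1} with hQdef
  have hQK : Qs ⊆ K := by
    rintro x ⟨q, ⟨hq0, hq1⟩, rfl⟩
    exact ⟨(q : ℝ), ⟨by exact_mod_cast hq0, by exact_mod_cast hq1⟩, rfl⟩
  have hKcomp : IsCompact K :=
    isCompact_Icc.image (continuous_id.smul continuous_const)
  have hKQcl : closure Qs = K := by
    apply subset_antisymm
    · rw [← hKcomp.isClosed.closure_eq]
      exact closure_mono hQK
    · intro x hx
      rw [hKdef] at hx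
      obtain ⟨t, ⟨ht0, ht1⟩, rfl⟩ := hx
      rw [mem_closure_iff]
      intro O hO hxO
      have hO' : IsOpen ((fun s : ℝ => s • v) ⁻¹' O) :=
        hO.preimage (continuous_id.smul continuous_const)
      have htO' : t ∈ (fun s : ℝ => s • v) ⁻¹' O := hxO
      obtain ⟨δ, hδ, hball⟩ := Metric.isOpen_iff.mp hO' t htO'
      have hq : ∃ q : ℚ, 0 ≤ q ∧ q ≤ 1 ∧ |(q : ℝ) - t| < δ := by
        rcases lt_or_eq_of_le ht1 with ht | ht
        · obtain ⟨q, hq1, hq2⟩ := exists_rat_btwn (lt_min (lt_add_of_pos_right t hδ) ht)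
          refine ⟨q, ?_, ?_, ?_⟩
          · exact_mod_cast le_of_lt (lt_of_le_of_lt ht0 hq1)
          · exact_mod_cast le_of_lt (lt_of_lt_of_le hq2 (min_le_right _ _))
          · rw [abs_lt]
            constructor
            · linarith
            · have := lt_of_lt_of_le hq2 (min_le_left _ _)
              linarith
        · subst ht
          obtain ⟨q, hq1, hq2⟩ := exists_rat_btwn
            (show max (1 - δ) 0 < (1:ℝ) by
              apply max_lt
              · linarith
              · linarith)
          refine ⟨q, ?_, ?_, ?_⟩
          · exact_mod_cast le_of_lt (lt_of_le_of_lt (le_max_right _ _) hq1)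
          · exact_mod_cast le_of_lt hq2
          · rw [abs_lt]
            constructor
            · have h3 := lt_of_le_of_lt (le_max_left _ _) hq1
              linarith
            · linarith
      obtain ⟨q, hq0, hq1, hqd⟩ := hq
      refine ⟨(q : ℝ) • v, ?_, ?_⟩
      · apply hball
        rw [Metric.mem_ball, Real.dist_eq]
        exact hqd
      · rw [hQdef]
        exact ⟨q, ⟨hq0, hq1⟩, rfl⟩
  have hQcrowd : ∀ x ∈ Qs, x ∈ closure (K \ {x}) := by
    intro x hx
    rw [hQdef] at hx
    obtain ⟨q, ⟨hq0, hq1⟩, rfl⟩ := hx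
    rcases eq_or_lt_of_le hq0 with hq | hq
    · have h0 : ((q : ℝ)) = 0 := by exact_mod_cast hq.symm
      apply mem_closure_of_tendsto
        (show Tendsto (fun m : ℕ => ((1 : ℝ) / (m + 1)) • v) atTop (𝓝 ((q : ℝ) • v)) by
          rw [h0, zero_smul]
          have := (tendsto_one_div_add_atTop_nhds_zero_nat (𝕜 := ℝ)).smul_const v
          rwa [zero_smul] at this)
      apply Eventually.of_forall
      intro m
      have hm0 : (0 : ℝ) < 1 / (m + 1) := by positivity
      have hm1 : (1 : ℝ) / (m + 1) ≤ 1 := by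
        rw [div_le_one (by positivity)]
        linarith [Nat.cast_nonneg (α := ℝ) m]
      constructor
      · rw [hKdef]
        exact ⟨1 / (m + 1), ⟨le_of_lt hm0, hm1⟩, rfl⟩
      · simp only [Set.mem_singleton_iff]
        intro hcon
        have := hinj hcon
        rw [h0] at this
        linarith
    · have hqR : (0 : ℝ) < (q : ℝ) := by exact_mod_cast hq
      have hqR1 : ((q : ℝ)) ≤ 1 := by exact_mod_cast hq1
      apply mem_closure_of_tendsto
        (show Tendsto (fun m : ℕ => ((q : ℝ) * (1 - 1 / (m + 1))) • v) atTop
            (𝓝 ((q : ℝ) • v)) by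
          have h1 : Tendsto (fun m : ℕ => (q : ℝ) * (1 - 1 / (m + 1))) atTop
              (𝓝 ((q : ℝ) * (1 - 0))) :=
            tendsto_const_nhds.mul
              (tendsto_const_nhds.sub tendsto_one_div_add_atTop_nhds_zero_nat)
          rw [sub_zero, mul_one] at h1
          exact h1.smul_const v)
      apply Eventually.of_forall
      intro m
      have hm0 : (0 : ℝ) < 1 / (m + 1) := by positivity
      have hm1 : (1 : ℝ) / (m + 1) ≤ 1 := by
        rw [div_le_one (by positivity)]
        linarith [Nat.cast_nonneg (α := ℝ) m]
      constructor
      · rw [hKdef]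
        refine ⟨(q : ℝ) * (1 - 1 / (m + 1)), ⟨?_, ?_⟩, rfl⟩
        · have h2 : (0:ℝ) ≤ 1 - 1/(m+1) := by linarith
          positivity
        · nlinarith
      · simp only [Set.mem_singleton_iff]
        intro hcon
        have := hinj hcon
        nlinarith
  have hQcnt : Qs.Countable := (Set.to_countable _).image _
  -- the sequentially-rich dense set
  set D' : Set E := Set.range (fun p : ℕ × ℚ => e p.1 + (p.2 : ℝ) • v) with hD'def
  have hD'c : D'.Countable := Set.countable_range _
  have hD'd : Dense D' := by
    apply hD₀d.mono
    rintro x ⟨j, rfl⟩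
    exact ⟨(j, 0), by simp⟩
  -- KEY: every point is the limit of a sequence from any countable dense set
  have key : ∀ A : Set E, A.Countable → Dense A → ∀ x : E,
      ∃ u : ℕ → E, (∀ m, u m ∈ A) ∧ Tendsto u atTop (𝓝 x) := by
    intro A hAc hAd x
    obtain ⟨h, hh⟩ := hhom D' (insert x A) hD'c hD'd (hAc.insert x)
      (hAd.mono (Set.subset_insert x A))
    have hx : x ∈ h '' D' := by
      rw [hh]
      exact Set.mem_insert x A
    obtain ⟨y, hyD, hyx⟩ := hx
    rw [hD'def] at hyD
    obtain ⟨⟨j, q⟩, rfl⟩ := hyD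
    set w : ℕ → E := fun m => e j + ((q + 1 / (m + 1) : ℚ) : ℝ) • v with hwdef
    have hwD : ∀ m, w m ∈ D' := by
      intro m
      rw [hD'def]
      exact ⟨(j, q + 1 / (m + 1)), rfl⟩
    have hwne : ∀ m, w m ≠ e j + (q : ℝ) • v := by
      intro m hcon
      have h1 : ((q + 1 / (m + 1) : ℚ) : ℝ) • v = (q : ℝ) • v := add_left_cancel hcon
      have h2 : ((q + 1 / (m + 1) : ℚ) : ℝ) = (q : ℝ) := hinj h1
      have h3 : (q + 1 / (m + 1) : ℚ) = q := by exact_mod_cast h2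
      have h4 : (1 / (m + 1) : ℚ) = 0 := by linarith [h3]
      have h5 : ((m : ℚ) + 1) ≠ 0 := by positivity
      rw [div_eq_zero_iff] at h4
      rcases h4 with h4 | h4
      · exact one_ne_zero h4
      · exact h5 (by exact_mod_cast h4)
    have hwt : Tendsto w atTop (𝓝 (e j + (q : ℝ) • v)) := by
      have hcast : ∀ m : ℕ, ((q + 1 / (m + 1) : ℚ) : ℝ) = (q : ℝ) + 1 / ((m : ℝ) + 1) := by
        intro m
        push_cast
        ring
      have h1 : Tendsto (fun m : ℕ => (q : ℝ) + 1 / ((m : ℝ) + 1)) atTop (𝓝 ((q : ℝ) + 0)) :=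
        tendsto_const_nhds.add tendsto_one_div_add_atTop_nhds_zero_nat
      rw [add_zero] at h1
      have h2 : Tendsto (fun m : ℕ => ((q + 1 / (m + 1) : ℚ) : ℝ)) atTop (𝓝 (q : ℝ)) := by
        simp_rw [hcast]
        exact h1
      exact (h2.smul_const v).const_add (e j)
    refine ⟨fun m => h (w m), ?_, ?_⟩
    · intro m
      have hmem : h (w m) ∈ h '' D' := Set.mem_image_of_mem h (hwD m)
      rw [hh] at hmem
      rcases hmem with hl | hr
      · exfalso
        have : w m = e j + (q : ℝ) • v := h.injective (by rw [hl, ← hyx])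
        exact hwne m this
      · exact hr
    · have := (h.continuous.tendsto (e j + (q : ℝ) • v)).comp hwt
      rwa [hyx] at this
  -- construct the thin dense set S
  have hAmk : ∀ i k : ℕ, ∃ u : ℕ → E,
      (∀ m, u m ∈ (Set.range e \ N (max i k))) ∧ Tendsto u atTop (𝓝 (e i)) := by
    intro i k
    apply key
    · exact (Set.countable_range e).mono diff_subset
    · exact my_dense_diff_closed hD₀d (hNcl _) (hNint _)
  choose a ha hat using hAmk
  set S : Set E := ⋃ p : ℕ × ℕ, Set.range (a p.1 p.2) with hSdef
  have hSc : S.Countable := Set.countable_iUnion fun p => Set.countable_range _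
  have hSd : Dense S := by
    have hsub : Set.range e ⊆ closure S := by
      rintro x ⟨i, rfl⟩
      exact mem_closure_of_tendsto (hat i 0) (Eventually.of_forall fun m =>
        Set.mem_iUnion.mpr ⟨(i, 0), Set.mem_range_self m⟩)
    intro x
    have : closure (Set.range e) ⊆ closure S := by
      rw [← closure_closure (s := S)]
      exact closure_mono hsub
    exact this (hD₀d x)
  -- the fat dense set
  set A' : Set E := Qs ∪ Set.range e with hA'def
  have hA'c : A'.Countable := hQcnt.union (Set.countable_range e)
  have hA'd : Dense A' := hD₀d.mono subset_union_right
  obtain ⟨h, hh⟩ := hhom A' S hA'c hA'd hSc hSd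
  set L : Set E := h '' K with hLdef
  have hLcomp : IsCompact L := hKcomp.image h.continuous
  have hLQ : closure (h '' Qs) = L := by
    rw [← Homeomorph.image_closure, hKQcl]
  -- Baire category on L
  have hLne : L.Nonempty := by
    refine ⟨h ((0 : ℝ) • v), Set.mem_image_of_mem h ?_⟩
    rw [hKdef]
    exact ⟨0, ⟨le_refl 0, zero_le_one⟩, rfl⟩
  obtain ⟨n, U', hU'op, y₀, hy₀U', hy₀L, hU'N⟩ :
      ∃ (n : ℕ) (U' : Set E), IsOpen U' ∧ ∃ y₀, y₀ ∈ U' ∧ y₀ ∈ L ∧ U' ∩ L ⊆ N n := by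
    haveI : CompactSpace ↥L := isCompact_iff_compactSpace.mp hLcomp
    haveI : Nonempty ↥L := ⟨⟨hLne.choose, hLne.choose_spec⟩⟩
    have hTcl : ∀ m, IsClosed ((Subtype.val : ↥L → E) ⁻¹' (N m)) :=
      fun m => (hNcl m).preimage continuous_subtype_val
    have hTcov : (⋃ m, (Subtype.val : ↥L → E) ⁻¹' (N m)) = univ := by
      apply eq_univ_of_forall
      intro z
      obtain ⟨m, hm⟩ := hNcov z.1
      exact Set.mem_iUnion.mpr ⟨m, hm⟩
    obtain ⟨n, z₀, hz₀⟩ := nonempty_interior_of_iUnion_of_closed hTcl hTcov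
    obtain ⟨U', hU'op, hU'eq⟩ := isOpen_induced_iff.mp
      (isOpen_interior (s := (Subtype.val : ↥L → E) ⁻¹' (N n)))
    refine ⟨n, U', hU'op, z₀.1, ?_, z₀.2, ?_⟩
    · have : z₀ ∈ Subtype.val ⁻¹' U' := by
        rw [hU'eq]
        exact hz₀
      exact this
    · intro z hz
      have hmem : (⟨z, hz.2⟩ : ↥L) ∈ Subtype.val ⁻¹' U' := hz.1
      rw [hU'eq] at hmem
      exact (interior_subset hmem : (⟨z, hz.2⟩ : ↥L) ∈ Subtype.val ⁻¹' N n)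
  -- the crowded subset W
  set W : Set E := (h '' Qs) ∩ U' with hWdef
  have hWne : W.Nonempty := by
    have : y₀ ∈ closure (h '' Qs) := hLQ.symm ▸ hy₀L
    rw [mem_closure_iff] at this
    obtain ⟨w, hwU', hwQ⟩ := this U' hU'op hy₀U'
    exact ⟨w, hwQ, hwU'⟩
  have hWSN : W ⊆ S ∩ N n := by
    rintro w ⟨hwQ, hwU'⟩
    constructor
    · rw [← hh]; exact Set.image_mono (f := h) subset_union_left hwQ
    · exact hU'N ⟨hwU', Set.image_mono (f := h) hQK hwQ⟩
  have hWcrowd : ∀ w ∈ W, w ∈ closure (W \ {w}) := by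
    intro w hw
    rw [hWdef] at hw
    obtain ⟨⟨x, hxQ, rfl⟩, hwU⟩ := hw
    have hstep1 : h x ∈ closure (L \ {h x}) := by
      have h1 : h x ∈ h '' closure (K \ {x}) := Set.mem_image_of_mem h (hQcrowd x hxQ)
      rw [Homeomorph.image_closure, Set.image_diff h.injective, Set.image_singleton,
        ← hLdef] at h1
      exact h1
    rw [mem_closure_iff]
    intro O hOop hOw
    have hO1 : IsOpen (O ∩ U') := hOop.inter hU'op
    have hw1 : h x ∈ O ∩ U' := ⟨hOw, hwU⟩
    rw [mem_closure_iff] at hstep1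
    obtain ⟨z, hzO, hzL, hzw⟩ := hstep1 (O ∩ U') hO1 hw1
    have hO2 : IsOpen ((O ∩ U') \ {h x}) := hO1.sdiff isClosed_singleton
    have hz2 : z ∈ (O ∩ U') \ {h x} := ⟨hzO, hzw⟩
    have hzL2 : z ∈ closure (h '' Qs) := hLQ.symm ▸ hzL
    rw [mem_closure_iff] at hzL2
    obtain ⟨w', hw'O, hw'Q⟩ := hzL2 _ hO2 hz2
    refine ⟨w', hw'O.1.1, ?_, hw'O.2⟩
    rw [hWdef]
    exact ⟨hw'Q, hw'O.1.2⟩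
  -- trace is contained in finitely many convergent sequences
  have hSNB : S ∩ N n ⊆ ⋃ i ∈ Finset.range n, ⋃ k ∈ Finset.range n, Set.range (a i k) := by
    rintro x ⟨hxS, hxN⟩
    obtain ⟨⟨i, k⟩, hx⟩ := Set.mem_iUnion.mp hxS
    obtain ⟨m, rfl⟩ := hx
    have hnotN : a i k m ∉ N (max i k) := (ha i k m).2
    have hlt : max i k < n := by
      by_contra hle
      push_neg at hle
      exact hnotN (hNmono hle hxN)
    simp only [Set.mem_iUnion, Finset.mem_range]
    exact ⟨i, lt_of_le_of_lt (le_max_left _ _) hlt, k,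
      lt_of_le_of_lt (le_max_right _ _) hlt, Set.mem_range_self m⟩
  -- final contradiction
  have hWB : W ⊆ ⋃ i ∈ Finset.range n, ⋃ k ∈ Finset.range n, Set.range (a i k) :=
    hWSN.trans hSNB
  have hWe : ∀ w' ∈ W, ∃ i, i < n ∧ w' = e i := by
    intro w' hw'
    have h1 : w' ∈ closure (W \ {w'}) := hWcrowd w' hw'
    set C : Set E := ⋃ i ∈ Finset.range n, ⋃ k ∈ Finset.range n,
      closure (Set.range (a i k) \ {w'}) with hCdef
    have hCcl : IsClosed C := by
      apply Set.Finite.isClosed_biUnion (Finset.finite_toSet _)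
      intro i _
      apply Set.Finite.isClosed_biUnion (Finset.finite_toSet _)
      intro k _
      exact isClosed_closure
    have hsub : W \ {w'} ⊆ C := by
      rintro z ⟨hzW, hzne⟩
      obtain ⟨i, hi, rest⟩ := Set.mem_iUnion₂.mp (hWB hzW)
      obtain ⟨k, hk, hzr⟩ := Set.mem_iUnion₂.mp rest
      exact Set.mem_iUnion₂.mpr ⟨i, hi, Set.mem_iUnion₂.mpr ⟨k, hk,
        subset_closure ⟨hzr, hzne⟩⟩⟩
    have h2 : w' ∈ C := closure_minimal hsub hCcl h1
    obtain ⟨i, hi, rest⟩ := Set.mem_iUnion₂.mp h2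
    obtain ⟨k, _, hwcl⟩ := Set.mem_iUnion₂.mp rest
    by_contra hcon
    push_neg at hcon
    have hnotmem : w' ∉ insert (e i) (Set.range (a i k) \ {w'}) := by
      intro hmem
      rcases hmem with heq | hmem2
      · exact hcon i (Finset.mem_range.mp hi) heq
      · exact hmem2.2 rfl
    exact my_not_mem_closure_seq (hat i k)
      (Set.diff_subset.trans (subset_refl _) : Set.range (a i k) \ {w'} ⊆ Set.range (a i k))
      hnotmem hwcl
  obtain ⟨w, hw⟩ := hWne
  have hWfin : W ⊆ e '' {i | i < n} := by
    intro w' hw'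
    obtain ⟨i, hi, rfl⟩ := hWe w' hw'
    exact ⟨i, hi, rfl⟩
  have hfin : (W \ {w}).Finite :=
    (((Set.finite_Iio n).image e).subset hWfin).subset diff_subset
  have h1 : w ∈ closure (W \ {w}) := hWcrowd w hw
  rw [hfin.isClosed.closure_eq] at h1
  exact h1.2 rfl
end

section
/- Let E be an infinite-dimensional normed space over ℝ and let F be a vector subspace of the continuous dual E* separating points of E. Then E equipped with the weak topology σ(E, F) is meager in itself; in particular it is not a Baire space. -/
open Set Filter Topology

/-- Finitely many functionals on an infinite-dimensional space have a nonzero common zero. -/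
lemma aux_common_kernel {E : Type*} [NormedAddCommGroup E] [NormedSpace ℝ E]
    (hinf : ¬ FiniteDimensional ℝ E) {ι : Type*} (I : Set ι) (hI : I.Finite)
    (φ : ι → E →L[ℝ] ℝ) : ∃ v : E, v ≠ 0 ∧ ∀ i ∈ I, φ i v = 0 := by
  haveI := hI.fintype
  set L : E →ₗ[ℝ] (I → ℝ) := LinearMap.pi (fun i : I => (φ i).toLinearMap) with hL
  have hker : LinearMap.ker L ≠ ⊥ := by
    intro h
    exact hinf (FiniteDimensional.of_injective L (LinearMap.ker_eq_bot.1 h))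
  obtain ⟨v, hv, hv0⟩ := (Submodule.ne_bot_iff _).1 hker
  refine ⟨v, hv0, fun i hi => ?_⟩
  have := congrFun (LinearMap.mem_ker.1 hv) ⟨i, hi⟩
  simpa [hL, LinearMap.pi_apply] using this

/-- For an infinite-dimensional normed space `E` and a point-separating subspace `F` of
the dual, `E` with the weak topology `σ(E,F)` is meager in itself and not Baire. -/
theorem stmt_8 {E : Type*} [NormedAddCommGroup E] [NormedSpace ℝ E]
    (hinf : ¬ FiniteDimensional ℝ E)
    (F : Submodule ℝ (E →L[ℝ] ℝ))
    (hsep : ∀ x : E, x ≠ 0 → ∃ φ ∈ F, φ x ≠ 0) :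
    @IsMeagre E (⨅ φ : F, TopologicalSpace.induced (fun x => (φ : E →L[ℝ] ℝ) x)
      inferInstance) Set.univ ∧
    ¬ @BaireSpace E (⨅ φ : F, TopologicalSpace.induced (fun x => (φ : E →L[ℝ] ℝ) x)
      inferInstance) := by
  letI t : TopologicalSpace E := ⨅ φ : F, TopologicalSpace.induced
      (fun x => (φ : E →L[ℝ] ℝ) x) inferInstance
  have hcont : ∀ φ : F, @Continuous E ℝ t _ (fun x : E => φ.1 x) := fun φ =>
    continuous_iff_le_induced.2
      (iInf_le (fun φ : F => TopologicalSpace.induced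
        (fun x : E => φ.1 x) inferInstance) φ)
  set A : ℕ → Set E := fun n => ⋂ φ : F, (fun x : E => φ.1 x) ⁻¹'
      Set.Icc (-((n : ℝ) * ‖φ.1‖)) ((n : ℝ) * ‖φ.1‖) with hA
  have hclosed : ∀ n, IsClosed (A n) := fun n =>
    isClosed_iInter fun φ => isClosed_Icc.preimage (hcont φ)
  -- every A n has empty interior
  have hint : ∀ n, interior (A n) = ∅ := by
    intro n
    by_contra h
    obtain ⟨x, hx⟩ := Set.nonempty_iff_ne_empty.2 h
    have hU : interior (A n) ∈ 𝓝 x := isOpen_interior.mem_nhds hx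
    have hnhds : (𝓝 x : Filter E) = ⨅ φ : F,
        @nhds E (TopologicalSpace.induced (fun x : E => φ.1 x) inferInstance) x :=
      nhds_iInf
    rw [hnhds, Filter.mem_iInf] at hU
    obtain ⟨I, hIfin, V, hV, hUeq⟩ := hU
    obtain ⟨v, hv0, hvker⟩ := aux_common_kernel hinf I hIfin
        (fun φ : F => φ.1)
    -- x + s • v stays in every V i, hence in A n for all s
    have hmem : ∀ s : ℝ, x + s • v ∈ A n := by
      intro s
      have : x + s • v ∈ interior (A n) := by
        rw [hUeq]
        refine Set.mem_iInter.2 fun i => ?_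
        have := hV i
        rw [nhds_induced, Filter.mem_comap] at this
        obtain ⟨W, hW, hWV⟩ := this
        apply hWV
        have : (i : F).1 (x + s • v) = (i : F).1 x := by
          rw [map_add, map_smul, hvker i i.2]
          simp
        simpa [this] using mem_of_mem_nhds hW
      exact interior_subset this
    obtain ⟨ψ, hψF, hψv⟩ := hsep v hv0
    -- choose s making ψ(x + s • v) too large
    set s : ℝ := ((n : ℝ) * ‖ψ‖ + 1 - ψ x) / ψ v with hs
    have hmem' := hmem s
    rw [hA] at hmem'
    have := Set.mem_iInter.1 hmem' ⟨ψ, hψF⟩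
    simp only [Set.mem_preimage, Set.mem_Icc] at this
    have hval : ψ (x + s • v) = (n : ℝ) * ‖ψ‖ + 1 := by
      rw [map_add, map_smul, smul_eq_mul, hs, div_mul_cancel₀ _ hψv]
      ring
    rw [hval] at this
    linarith [this.2]
  -- the sets A n cover E
  have hcover : (⋃ n, A n) = Set.univ := by
    refine Set.eq_univ_of_forall fun x => ?_
    obtain ⟨n, hn⟩ := exists_nat_ge ‖x‖
    refine Set.mem_iUnion.2 ⟨n, Set.mem_iInter.2 fun φ => ?_⟩
    simp only [Set.mem_preimage, Set.mem_Icc, ← abs_le]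
    calc |φ.1 x| ≤ ‖φ.1‖ * ‖x‖ := φ.1.le_opNorm x
      _ ≤ ‖φ.1‖ * n := by
          exact mul_le_mul_of_nonneg_left hn (norm_nonneg _)
      _ = (n : ℝ) * ‖φ.1‖ := mul_comm _ _
  have hmeagre : IsMeagre (Set.univ : Set E) := by
    rw [isMeagre_iff_countable_union_isNowhereDense]
    refine ⟨Set.range A, ?_, Set.countable_range A, ?_⟩
    · rintro _ ⟨n, rfl⟩
      exact ((hclosed n).isNowhereDense_iff).2 (hint n)
    · rw [Set.sUnion_range, hcover]
  refine ⟨hmeagre, fun hB => ?_⟩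
  haveI : Nonempty E := ⟨0⟩
  obtain ⟨n, hn⟩ := nonempty_interior_of_iUnion_of_closed hclosed hcover
  rw [hint n] at hn
  exact Set.not_nonempty_empty hn
end

section
/- Let X be a Tychonoff space containing an infinite bounded subset A (i.e., f(A) is a bounded subset of ℝ for every continuous f : X → ℝ). Then C_p(X), the space of continuous real-valued functions on X with the topology of pointwise convergence, is meager in itself. -/
open Topology Filter Set Bornology

/-- If a Tychonoff space `X` contains an infinite bounded subset `A`, then `C_p(X)`
(the continuous real functions with the pointwise topology, i.e. the subspace topology
from `X → ℝ`) is meager in itself. -/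
theorem stmt_12 {X : Type*} [TopologicalSpace X] [T35Space X]
    (A : Set X) (hAinf : A.Infinite)
    (hAbd : ∀ f : X → ℝ, Continuous f → Bornology.IsBounded (f '' A)) :
    IsMeagre (Set.univ : Set {f : X → ℝ // Continuous f}) := by
  set C := {f : X → ℝ // Continuous f}
  set F : ℕ → Set C := fun n => {f | ∀ a ∈ A, |f.1 a| ≤ n} with hF
  -- each F n is closed
  have hclosed : ∀ n, IsClosed (F n) := by
    intro n
    have : F n = ⋂ a ∈ A, {f : C | |f.1 a| ≤ n} := by
      ext f; simp [hF]
    rw [this]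
    refine isClosed_biInter fun a _ => ?_
    have hc : Continuous fun f : C => |f.1 a| :=
      continuous_abs.comp ((continuous_apply a).comp continuous_subtype_val)
    exact isClosed_le hc continuous_const
  -- each F n has empty interior
  have hint : ∀ n, interior (F n) = ∅ := by
    intro n
    rw [interior_eq_empty_iff_dense_compl]
    rw [dense_iff_inter_open]
    rintro U hU ⟨f, hfU⟩
    -- pull back to the pi topology
    have hU' : U ∈ 𝓝 f := hU.mem_nhds hfU
    rw [nhds_induced, Filter.mem_comap] at hU'
    obtain ⟨t, ht, htU⟩ := hU'
    rw [nhds_pi, Filter.mem_pi] at ht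
    obtain ⟨I, hIfin, s, hs, hst⟩ := ht
    -- find a point of A outside I
    obtain ⟨a, haA, haI⟩ : ∃ a ∈ A, a ∉ I := by
      by_contra h
      push_neg at h
      exact hAinf (hIfin.subset h)
    -- I is closed (finite set in T1 space)
    have hIc : IsClosed I := hIfin.isClosed
    obtain ⟨φ, hφc, hφa, hφI⟩ := CompletelyRegularSpace.completely_regular a I hIc haI
    -- ψ := 1 - φ : ψ a = 1, ψ = 0 on I, continuous into ℝ
    set ψ : X → ℝ := fun x => 1 - (φ x : ℝ) with hψ
    have hψc : Continuous ψ := continuous_const.sub (continuous_subtype_val.comp hφc)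
    have hψa : ψ a = 1 := by simp [hψ, hφa]
    have hψI : ∀ x ∈ I, ψ x = 0 := by
      intro x hx
      have := hφI hx
      simp [hψ, this]

    set c : ℝ := n + 1 + |f.1 a| with hc
    set g : X → ℝ := fun x => f.1 x + c * ψ x with hg
    have hgc : Continuous g := f.2.add (continuous_const.mul hψc)
    have hgI : ∀ x ∈ I, g x = f.1 x := by
      intro x hx; simp [hg, hψI x hx]
    have hga : g a = f.1 a + c := by simp [hg, hψa]
    refine ⟨⟨g, hgc⟩, ⟨?_, ?_⟩⟩
    · apply htU
      show g ∈ t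
      apply hst
      intro x hx
      rw [hgI x hx]
      exact mem_of_mem_nhds (hs x)
    · -- g ∉ F n
      intro hmem
      have h1 := hmem a haA
      have h2 : (n : ℝ) + 1 ≤ g a := by
        rw [hga, hc]
        have := abs_nonneg (f.1 a)
        have := neg_abs_le (f.1 a)
        linarith
      have h3 : g a ≤ |g a| := le_abs_self _
      linarith
  -- univ ⊆ ⋃ n, F n
  have hcover : (Set.univ : Set C) ⊆ ⋃ n, F n := by
    intro f _
    obtain ⟨Cb, hCb⟩ := (isBounded_iff_forall_norm_le.mp (hAbd f.1 f.2))
    refine Set.mem_iUnion.mpr ⟨⌈Cb⌉₊, fun a ha => ?_⟩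
    have := hCb (f.1 a) ⟨a, ha, rfl⟩
    calc |f.1 a| ≤ Cb := this
      _ ≤ ⌈Cb⌉₊ := Nat.le_ceil Cb
  refine IsMeagre.mono hcover (isMeagre_iUnion fun n => ?_)
  -- F n is meagre: closed with empty interior
  have hnd : IsNowhereDense (F n) := ((hclosed n).isNowhereDense_iff).mpr (hint n)
  rw [isMeagre_iff_countable_union_isNowhereDense]
  exact ⟨{F n}, by simpa using hnd, Set.countable_singleton _, by simp⟩
end

section
/- Let X be a metrizable space. If C_p(X) is countable dense homogeneous, then X is discrete. -/
open TopologicalSpace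

open Set Filter Topology

/-- If `X` is metrizable and `C_p(X)` is CDH, then `X` is discrete. -/
theorem stmt_13 {X : Type*} [TopologicalSpace X] [MetrizableSpace X]
    (hcdh : CDH {f : X → ℝ // Continuous f}) :
    DiscreteTopology X := by
  letI : MetricSpace X := TopologicalSpace.metrizableSpaceMetric X
  rw [discreteTopology_iff_isOpen_singleton]
  by_contra hnd
  push_neg at hnd
  obtain ⟨x, hx⟩ := hnd
  -- a sequence of points distinct from x converging to x
  have hseq : ∀ k : ℕ, ∃ y : X, y ≠ x ∧ dist y x < 1 / (k + 1) := by
    intro k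
    by_contra hcon
    push_neg at hcon
    apply hx
    have hball : ({x} : Set X) = Metric.ball x (1 / (k + 1)) := by
      ext y
      simp only [mem_singleton_iff, Metric.mem_ball]
      constructor
      · rintro rfl; rw [dist_self]; positivity
      · intro hy
        by_contra hyx
        exact absurd hy (not_lt.mpr (hcon y hyx))
    rw [hball]
    exact Metric.isOpen_ball
  choose xs hne hlt using hseq
  have hdpos : ∀ k, 0 < dist (xs k) x := fun k => dist_pos.mpr (hne k)
  have hxs_tend : Tendsto xs atTop (𝓝 x) := by
    rw [tendsto_iff_dist_tendsto_zero]
    exact squeeze_zero (fun k => dist_nonneg) (fun k => (hlt k).le)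
      tendsto_one_div_add_atTop_nhds_zero_nat
  -- bumps
  obtain ⟨φ, hφ_cont, hφ_one, hφ_zero⟩ :
      ∃ φ : ℕ → X → ℝ, (∀ k, Continuous (φ k)) ∧ (∀ k, φ k (xs k) = 1) ∧
        (∀ k z, dist (xs k) x ≤ 2 * dist z (xs k) → φ k z = 0) := by
    refine ⟨fun k z => max 0 (1 - 2 * dist z (xs k) / dist (xs k) x),
      fun k => ?_, fun k => ?_, fun k z hz => ?_⟩
    · exact continuous_const.max
        (continuous_const.sub ((continuous_const.mul
          (continuous_id.dist continuous_const)).div_const _))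
    · simp [dist_self]
    · refine max_eq_left ?_
      have hd := hdpos k
      have h1 : (1:ℝ) ≤ 2 * dist z (xs k) / dist (xs k) x := (one_le_div hd).mpr hz
      linarith
  have hφx : ∀ k, φ k x = 0 := by
    intro k
    refine hφ_zero k x ?_
    rw [dist_comm x (xs k)]
    have := (hdpos k).le
    linarith [dist_nonneg (x := xs k) (y := x)]
  -- eventual vanishing at each point
  have hvanish : ∀ z : X, ∃ K : ℕ, ∀ k, K ≤ k → φ k z = 0 := by
    intro z
    by_cases hz : z = x
    · exact ⟨0, fun k _ => by rw [hz]; exact hφx k⟩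
    · have hdz : 0 < dist z x := dist_pos.mpr hz
      obtain ⟨N, hN⟩ := Metric.tendsto_atTop.mp hxs_tend (dist z x / 2) (by positivity)
      refine ⟨N, fun k hk => ?_⟩
      have h1 : dist (xs k) x < dist z x / 2 := hN k hk
      refine hφ_zero k z ?_
      have h2 : dist z x ≤ dist z (xs k) + dist (xs k) x := dist_triangle z (xs k) x
      linarith
  haveI hGne : Nonempty {f : X → ℝ // Continuous f} := ⟨⟨fun _ => 0, continuous_const⟩⟩
  haveI := hcdh.1
  obtain ⟨s, hsc, hsd⟩ := exists_countable_dense {f : X → ℝ // Continuous f}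
  obtain ⟨df, hdf⟩ := hsc.exists_eq_range hsd.nonempty
  -- the spiked family
  obtain ⟨F2, hF2⟩ :
      ∃ F2 : ℕ × ℕ → {f : X → ℝ // Continuous f},
        ∀ p z, (F2 p).1 z =
          (df p.1).1 z + ((p.1 : ℝ) + p.2 + 1 + |(df p.1).1 (xs p.2)|) * φ p.2 z := by
    refine ⟨fun p => ⟨fun z =>
      (df p.1).1 z + ((p.1 : ℝ) + p.2 + 1 + |(df p.1).1 (xs p.2)|) * φ p.2 z,
      (df p.1).2.add (continuous_const.mul (hφ_cont p.2))⟩, fun p z => rfl⟩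
  set B : Set {f : X → ℝ // Continuous f} := Set.range F2 with hB_def
  have hBc : B.Countable := Set.countable_range _
  have hBd : Dense B := by
    have key : ∀ i : ℕ, df i ∈ closure B := by
      intro i
      rw [mem_closure_iff]
      intro o ho hio
      obtain ⟨o', ho', rfl⟩ := isOpen_induced_iff.mp ho
      obtain ⟨I, u, hu, hsub⟩ := isOpen_pi_iff.mp ho' _ hio
      choose Kv hKv using hvanish
      have hmem : (F2 (i, I.sup Kv)).1 ∈ (↑I : Set X).pi u := by
        rw [Set.mem_pi]
        intro a ha
        have hφ0 : φ (I.sup Kv) a = 0 := hKv a _ (Finset.le_sup ha)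
        rw [hF2]
        simpa [hφ0] using (hu a ha).2
      exact ⟨F2 (i, I.sup Kv), hsub hmem, ⟨(i, I.sup Kv), rfl⟩⟩
    intro g
    have h1 : s ⊆ closure B := by
      rw [hdf]; rintro _ ⟨i, rfl⟩; exact key i
    have h2 : closure s ⊆ closure B := closure_minimal h1 isClosed_closure
    exact h2 (hsd g)
  -- the closed cover
  set Fn : ℕ → Set {f : X → ℝ // Continuous f} :=
    fun n => {g | ∀ k, |g.1 (xs k)| ≤ (n : ℝ)} with hFn_def
  have hFn_closed : ∀ n, IsClosed (Fn n) := by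
    intro n
    have heq : Fn n = ⋂ k, (fun g : {f : X → ℝ // Continuous f} =>
        g.1 (xs k)) ⁻¹' (Icc (-(n:ℝ)) n) := by
      ext g
      simp only [hFn_def, mem_setOf_eq, mem_iInter, mem_preimage, mem_Icc, abs_le]
    rw [heq]
    refine isClosed_iInter fun k => IsClosed.preimage ?_ isClosed_Icc
    exact (continuous_apply (xs k)).comp continuous_subtype_val
  have hFn_cover : ∀ g : {f : X → ℝ // Continuous f}, ∃ n : ℕ, g ∈ Fn n := by
    intro g
    have htg : Tendsto (fun k => |g.1 (xs k)|) atTop (𝓝 |g.1 x|) :=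
      ((g.2.tendsto x).comp hxs_tend).abs
    obtain ⟨M, hM⟩ := htg.bddAbove_range
    refine ⟨⌈M⌉₊, fun k => ?_⟩
    calc |g.1 (xs k)| ≤ M := hM ⟨k, rfl⟩
      _ ≤ (⌈M⌉₊ : ℝ) := Nat.le_ceil M
  have hBF : ∀ n : ℕ, (B ∩ Fn n).Finite := by
    intro n
    have hsub : B ∩ Fn n ⊆ F2 '' {p : ℕ × ℕ | p.1 ≤ n ∧ p.2 ≤ n} := by
      rintro g ⟨⟨p, rfl⟩, hgF⟩
      refine ⟨p, ?_, rfl⟩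
      have hval := hgF p.2
      rw [hF2, hφ_one, mul_one] at hval
      have h1 := (abs_le.mp hval).2
      have h3 := neg_abs_le ((df p.1).1 (xs p.2))
      have hp1 : (p.1:ℝ) ≤ n := by
        have := (Nat.cast_nonneg p.2 : (0:ℝ) ≤ p.2)
        linarith
      have hp2 : (p.2:ℝ) ≤ n := by
        have := (Nat.cast_nonneg p.1 : (0:ℝ) ≤ p.1)
        linarith
      exact ⟨by exact_mod_cast hp1, by exact_mod_cast hp2⟩
    have hfin : ({p : ℕ × ℕ | p.1 ≤ n ∧ p.2 ≤ n}).Finite := by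
      have hss : {p : ℕ × ℕ | p.1 ≤ n ∧ p.2 ≤ n} ⊆
          ↑(Finset.range (n+1) ×ˢ Finset.range (n+1)) := by
        rintro ⟨a, b⟩ ⟨h1, h2⟩
        simp [Nat.lt_succ_iff, h1, h2]
      exact (Finset.range (n+1) ×ˢ Finset.range (n+1)).finite_toSet.subset hss
    exact (hfin.image F2).subset hsub
  -- constants
  obtain ⟨cst, cst_cont, hcst⟩ :
      ∃ cst : ℝ → {f : X → ℝ // Continuous f}, Continuous cst ∧ ∀ r z, (cst r).1 z = r :=
    ⟨fun r => ⟨fun _ => r, continuous_const⟩,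
      Continuous.subtype_mk (continuous_pi fun _ => continuous_id) _, fun _ _ => rfl⟩
  have cst_inj : Function.Injective cst := by
    intro a b hab
    have := congrArg (fun g => (g : {f : X → ℝ // Continuous f}).1 x) hab
    simpa [hcst] using this
  set QI : Set {f : X → ℝ // Continuous f} :=
    cst '' (Icc (0:ℝ) 1 ∩ Set.range ((↑) : ℚ → ℝ)) with hQI_def
  set A : Set {f : X → ℝ // Continuous f} := s ∪ QI with hA_def
  have hAc : A.Countable :=
    hsc.union (((Set.countable_range ((↑) : ℚ → ℝ)).mono inter_subset_right).image cst)
  have hAd : Dense A := hsd.mono subset_union_left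
  obtain ⟨h, hh⟩ := hcdh.2 A B hAc hAd hBc hBd
  -- the compact copy of [0,1]
  set C : Set {f : X → ℝ // Continuous f} := ⇑h '' (cst '' (Icc (0:ℝ) 1)) with hC_def
  have hCcpt : IsCompact C := (isCompact_Icc.image cst_cont).image h.continuous
  have hQIC : ⇑h '' QI ⊆ C :=
    image_mono (image_mono inter_subset_left)
  have hQIB : ⇑h '' QI ⊆ B := by
    rw [← hh]; exact image_mono subset_union_right
  have hCd : C ⊆ closure (⇑h '' QI) := by
    have hIccQ : Icc (0:ℝ) 1 ⊆ closure (Icc (0:ℝ) 1 ∩ Set.range ((↑) : ℚ → ℝ)) := by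
      intro r hr
      rw [Metric.mem_closure_iff]
      intro ε hε
      rcases eq_or_lt_of_le hr.1 with h0 | h0
      · refine ⟨0, ⟨by norm_num, ⟨0, by norm_num⟩⟩, ?_⟩
        rw [← h0]
        simpa using hε
      · have hlo : max 0 (r - ε) < r := max_lt h0 (by linarith)
        obtain ⟨q, hq1, hq2⟩ := exists_rat_btwn hlo
        refine ⟨(q:ℝ), ⟨⟨?_, ?_⟩, ⟨q, rfl⟩⟩, ?_⟩
        · exact le_of_lt (lt_of_le_of_lt (le_max_left 0 (r - ε)) hq1)
        · exact le_trans hq2.le hr.2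
        · rw [Real.dist_eq, abs_sub_lt_iff]
          have := le_max_right 0 (r - ε)
          constructor <;> linarith
    have h1 : cst '' Icc (0:ℝ) 1 ⊆ closure QI := by
      rintro g ⟨r, hr, rfl⟩
      exact image_closure_subset_closure_image cst_cont (mem_image_of_mem _ (hIccQ hr))
    calc C ⊆ ⇑h '' closure QI := image_mono h1
      _ ⊆ closure (⇑h '' QI) := image_closure_subset_closure_image h.continuous
  -- Baire on C
  haveI : CompactSpace ↥C := isCompact_iff_compactSpace.mp hCcpt
  haveI : Nonempty ↥C :=
    ⟨⟨h (cst 0), mem_image_of_mem _ (mem_image_of_mem _ (by norm_num))⟩⟩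
  set Tn : ℕ → Set ↥C := fun n => Subtype.val ⁻¹' Fn n with hTn_def
  have hTn_closed : ∀ n, IsClosed (Tn n) :=
    fun n => (hFn_closed n).preimage continuous_subtype_val
  have hTn_cover : ⋃ n, Tn n = univ := by
    apply eq_univ_iff_forall.mpr
    intro z
    obtain ⟨n, hn⟩ := hFn_cover z.val
    exact mem_iUnion.mpr ⟨n, hn⟩
  obtain ⟨n, hn⟩ := nonempty_interior_of_iUnion_of_closed hTn_closed hTn_cover
  obtain ⟨c0, hc0⟩ := hn
  obtain ⟨t, hts, hto, hct⟩ := mem_interior.mp hc0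
  obtain ⟨V, hV, hVt⟩ := isOpen_induced_iff.mp hto
  have hc0V : (c0 : {f : X → ℝ // Continuous f}) ∈ V := by
    have hmem : c0 ∈ Subtype.val ⁻¹' V := by rw [hVt]; exact hct
    exact hmem
  have hVsub : ∀ g (hg : g ∈ C), g ∈ V → g ∈ Fn n := by
    intro g hg hgV
    have hmem : (⟨g, hg⟩ : ↥C) ∈ Subtype.val ⁻¹' V := hgV
    rw [hVt] at hmem
    exact hts hmem
  have hS_fin : (B ∩ Fn n).Finite := hBF n
  -- V ∩ C is finite
  have hVC_sub : V ∩ C ⊆ B ∩ Fn n := by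
    intro g hg
    have h1 : g ∈ closure (V ∩ ⇑h '' QI) :=
      IsOpen.inter_closure hV ⟨hg.1, hCd hg.2⟩
    have h2 : V ∩ ⇑h '' QI ⊆ B ∩ Fn n := by
      rintro g' ⟨hg'V, hg'Q⟩
      exact ⟨hQIB hg'Q, hVsub g' (hQIC hg'Q) hg'V⟩
    exact closure_minimal h2 hS_fin.isClosed h1
  have hVC_fin : (V ∩ C).Finite := hS_fin.subset hVC_sub
  have hc0C : (c0 : {f : X → ℝ // Continuous f}) ∈ C := c0.2
  -- isolate a point of C
  set W : Set {f : X → ℝ // Continuous f} :=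
    V ∩ ⋂ z ∈ (V ∩ C) \ {(c0 : {f : X → ℝ // Continuous f})}, {z}ᶜ with hW_def
  have hW_open : IsOpen W := by
    refine hV.inter (Set.Finite.isOpen_biInter hVC_fin.diff ?_)
    intro z _
    exact isClosed_singleton.isOpen_compl
  have hc0W : (c0 : {f : X → ℝ // Continuous f}) ∈ W := by
    refine ⟨hc0V, mem_iInter₂.mpr fun z hz => ?_⟩
    simp only [mem_compl_iff, mem_singleton_iff]
    intro hzz
    exact hz.2 (mem_singleton_iff.mpr hzz.symm)
  have hWC : W ∩ C = {(c0 : {f : X → ℝ // Continuous f})} := by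
    apply Subset.antisymm
    · rintro g ⟨⟨hgV, hgI⟩, hgC⟩
      by_contra hne'
      have hgmem : g ∈ (V ∩ C) \ {(c0 : {f : X → ℝ // Continuous f})} :=
        ⟨⟨hgV, hgC⟩, by simpa using hne'⟩
      have := mem_iInter₂.mp hgI g hgmem
      simp at this
    · rintro g hgeq
      rw [mem_singleton_iff] at hgeq
      subst hgeq
      exact ⟨hc0W, hc0C⟩
  -- pull back to [0,1]
  obtain ⟨θ, hθ_cont, hθ_val, hθ_mem⟩ :
      ∃ θ : ↥(Icc (0:ℝ) 1) → {f : X → ℝ // Continuous f},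
        Continuous θ ∧ (∀ t', θ t' = h (cst t'.val)) ∧ ∀ t', θ t' ∈ C :=
    ⟨fun t' => h (cst t'.val), h.continuous.comp (cst_cont.comp continuous_subtype_val),
      fun _ => rfl, fun t' => mem_image_of_mem _ (mem_image_of_mem _ t'.2)⟩
  have hθ_inj : Function.Injective θ := by
    intro a b hab
    rw [hθ_val a, hθ_val b] at hab
    exact Subtype.ext (cst_inj (h.injective hab))
  obtain ⟨g0, hg0K, hg0⟩ := hc0C
  obtain ⟨r0, hr0, hg0r⟩ := hg0K
  have hθt0 : θ ⟨r0, hr0⟩ = (c0 : {f : X → ℝ // Continuous f}) := by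
    rw [hθ_val]
    show h (cst r0) = _
    rw [hg0r]
    exact hg0
  have hU0 : θ ⁻¹' W = {(⟨r0, hr0⟩ : ↥(Icc (0:ℝ) 1))} := by
    ext t'
    simp only [mem_preimage, mem_singleton_iff]
    constructor
    · intro htW
      have hmem : θ t' ∈ W ∩ C := ⟨htW, hθ_mem t'⟩
      rw [hWC] at hmem
      exact hθ_inj (by rw [hθt0]; exact hmem)
    · rintro rfl
      rw [hθt0]
      exact hc0W
  have hclopen : IsClopen ({(⟨r0, hr0⟩ : ↥(Icc (0:ℝ) 1))} : Set ↥(Icc (0:ℝ) 1)) := by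
    constructor
    · exact isClosed_singleton
    · rw [← hU0]
      exact hθ_cont.isOpen_preimage W hW_open
  haveI : PreconnectedSpace ↥(Icc (0:ℝ) 1) := Subtype.preconnectedSpace isPreconnected_Icc
  have huniv : ({(⟨r0, hr0⟩ : ↥(Icc (0:ℝ) 1))} : Set ↥(Icc (0:ℝ) 1)) = univ :=
    hclopen.eq_univ ⟨_, rfl⟩
  have h0 : (⟨0, by norm_num⟩ : ↥(Icc (0:ℝ) 1)) ∈
      ({(⟨r0, hr0⟩ : ↥(Icc (0:ℝ) 1))} : Set ↥(Icc (0:ℝ) 1)) := huniv ▸ mem_univ _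
  have h1 : (⟨1, by norm_num⟩ : ↥(Icc (0:ℝ) 1)) ∈
      ({(⟨r0, hr0⟩ : ↥(Icc (0:ℝ) 1))} : Set ↥(Icc (0:ℝ) 1)) := huniv ▸ mem_univ _
  rw [mem_singleton_iff] at h0 h1
  have h01 : (0 : ℝ) = 1 := congrArg Subtype.val (h0.trans h1.symm)
  norm_num at h01
end

section
/- Let X be a Tychonoff space containing a nontrivial convergent sequence. Then C_p(X, [0,1]), the space of continuous functions from X to [0,1] with the pointwise convergence topology, is meager in itself. -/
open Filter Topology

/-- If a Tychonoff space `X` contains a nontrivial convergent sequence, then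
`C_p(X, [0,1])` is meager in itself. -/
theorem stmt_14 {X : Type*} [TopologicalSpace X] [T35Space X]
    (hseq : ∃ (x : X) (u : ℕ → X), (∀ n, u n ≠ x) ∧ Tendsto u atTop (𝓝 x)) :
    IsMeagre (Set.univ :
      Set {f : X → ℝ // Continuous f ∧ ∀ x, f x ∈ Set.Icc (0:ℝ) 1}) := by
  obtain ⟨x, u, hux, hu⟩ := hseq
  set Y := {f : X → ℝ // Continuous f ∧ ∀ x, f x ∈ Set.Icc (0:ℝ) 1}
  set F : ℕ → Set Y := fun n => {f | ∀ k ≥ n, |f.1 (u k) - f.1 x| ≤ 1/3} with hF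
  -- the F n cover
  have hcover : (Set.univ : Set Y) ⊆ ⋃ n, F n := by
    intro f _
    have h1 : Tendsto (fun k => f.1 (u k) - f.1 x) atTop (𝓝 (f.1 x - f.1 x)) :=
      ((f.2.1.tendsto x).comp hu).sub tendsto_const_nhds
    rw [sub_self] at h1
    have h2 : ∀ᶠ k in atTop, |f.1 (u k) - f.1 x| ≤ 1/3 := by
      have := h1.eventually (Metric.ball_mem_nhds (0:ℝ) (by norm_num : (0:ℝ) < 1/3))
      filter_upwards [this] with k hk
      simpa [Real.dist_eq] using le_of_lt hk
    obtain ⟨n, hn⟩ := h2.exists_forall_of_atTop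
    exact Set.mem_iUnion.2 ⟨n, fun k hk => hn k hk⟩
  -- each F n is closed
  have hclosed : ∀ n, IsClosed (F n) := by
    intro n
    have : F n = ⋂ k, ⋂ _ : n ≤ k, {f : Y | |f.1 (u k) - f.1 x| ≤ 1/3} := by
      ext f; simp [hF, Set.mem_iInter]
    rw [this]
    refine isClosed_iInter fun k => isClosed_iInter fun _ => ?_
    have hc : Continuous fun f : Y => |f.1 (u k) - f.1 x| :=
      (((continuous_apply (u k)).comp continuous_subtype_val).sub
        ((continuous_apply x).comp continuous_subtype_val)).abs
    exact isClosed_le hc continuous_const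
  -- each F n has empty interior
  have hint : ∀ n, interior (F n) = ∅ := by
    intro n
    rw [Set.eq_empty_iff_forall_notMem]
    intro f hf
    have hmem : F n ∈ 𝓝 f := mem_interior_iff_mem_nhds.1 hf
    rw [nhds_induced (Subtype.val : Y → X → ℝ) f, Filter.mem_comap] at hmem
    obtain ⟨s, hs, hsub⟩ := hmem
    rw [nhds_pi, Filter.mem_pi] at hs
    obtain ⟨I, hIfin, t, ht, hts⟩ := hs
    -- find k ≥ n with u k ∉ insert x I
    have hev : ∀ᶠ k in atTop, u k ∉ I \ {x} := by
      have hclosedI : IsClosed (I \ {x}) := (hIfin.subset Set.diff_subset).isClosed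
      have hxo : (I \ {x})ᶜ ∈ 𝓝 x :=
        hclosedI.isOpen_compl.mem_nhds (by simp)
      exact hu.eventually hxo
    obtain ⟨k, hk1, hk2⟩ := (hev.and (eventually_ge_atTop n)).exists
    have huk : u k ∉ insert x I := by
      intro h
      rcases Set.mem_insert_iff.1 h with h | h
      · exact hux k h
      · exact hk1 ⟨h, hux k⟩
    -- separate u k from insert x I
    have hKclosed : IsClosed (insert x I) := (hIfin.insert x).isClosed
    obtain ⟨φ, hφc, hφ0, hφ1⟩ :=
      CompletelyRegularSpace.completely_regular (u k) (insert x I) hKclosed huk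
    set c : ℝ := if f.1 x ≤ 1/2 then 1 else 0 with hc
    have hc01 : c ∈ Set.Icc (0:ℝ) 1 := by
      rw [hc]; split <;> norm_num
    set g : X → ℝ := fun y => (1 - (φ y : ℝ)) * c + (φ y : ℝ) * f.1 y with hg
    have hφ01 : ∀ y, (φ y : ℝ) ∈ Set.Icc (0:ℝ) 1 := fun y => (φ y).2
    have hgc : Continuous g := by
      have : Continuous fun y => (φ y : ℝ) := continuous_subtype_val.comp hφc
      exact ((continuous_const.sub this).mul continuous_const).add (this.mul f.2.1)
    have hg01 : ∀ y, g y ∈ Set.Icc (0:ℝ) 1 := by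
      intro y
      obtain ⟨hp0, hp1⟩ := hφ01 y
      obtain ⟨hf0, hf1⟩ := f.2.2 y
      obtain ⟨hc0, hc1⟩ := hc01
      have h1 : 0 ≤ (1 - (φ y : ℝ)) * c := mul_nonneg (by linarith) hc0
      have h2 : 0 ≤ (φ y : ℝ) * f.1 y := mul_nonneg hp0 hf0
      have h3 : (1 - (φ y : ℝ)) * c ≤ 1 - (φ y : ℝ) :=
        mul_le_of_le_one_right (by linarith) hc1
      have h4 : (φ y : ℝ) * f.1 y ≤ (φ y : ℝ) := mul_le_of_le_one_right hp0 hf1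
      constructor
      · simpa [hg] using add_nonneg h1 h2
      · show (1 - (φ y : ℝ)) * c + (φ y : ℝ) * f.1 y ≤ 1
        linarith
    have hgK : ∀ y ∈ insert x I, g y = f.1 y := by
      intro y hy
      have : φ y = 1 := hφ1 hy
      simp [hg, this]
    have hgu : g (u k) = c := by simp [hg, hφ0]
    set gY : Y := ⟨g, hgc, hg01⟩ with hgY
    have hgmem : gY ∈ F n := by
      apply hsub
      apply hts
      intro i hi
      have : g i = f.1 i := hgK i (Set.mem_insert_of_mem x hi)
      simpa [hgY, this] using mem_of_mem_nhds (ht i)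
    have := hgmem k hk2
    change |g (u k) - g x| ≤ 1/3 at this
    rw [hgu, hgK x (Set.mem_insert x I)] at this
    have hgap : |c - f.1 x| ≥ 1/2 := by
      rw [hc]; split <;> rename_i h
      · rw [abs_of_nonneg (by linarith)]; linarith
      · push_neg at h
        rw [abs_of_nonpos (by linarith [ (f.2.2 x).2 ])]
        linarith [(f.2.2 x).2]
    linarith
  -- conclude
  refine IsMeagre.mono hcover (isMeagre_iUnion fun n => ?_)
  rw [IsMeagre, mem_residual_iff]
  refine ⟨{(F n)ᶜ}, ?_, ?_, Set.countable_singleton _, by simp⟩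
  · simp only [Set.mem_singleton_iff, forall_eq]
    exact (hclosed n).isOpen_compl
  · simp only [Set.mem_singleton_iff, forall_eq]
    exact interior_eq_empty_iff_dense_compl.1 (hint n)
end

section
/- Let Q be a closed subspace of a real topological vector space V such that Q is homeomorphic to the rational numbers ℚ. Then for every nonempty relatively open subset U of Q, the linear span of U is infinite-dimensional. -/
/-- If `Q` is a closed copy of `ℚ` in a Hausdorff real topological vector space, then the
linear span of every nonempty relatively open subset of `Q` is infinite-dimensional. -/
theorem stmt_16 {V : Type*} [AddCommGroup V] [Module ℝ V] [TopologicalSpace V]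
    [IsTopologicalAddGroup V] [ContinuousSMul ℝ V] [T2Space V]
    (Q : Set V) (hQclosed : IsClosed Q) (hQ : Nonempty (Q ≃ₜ ℚ))
    (U : Set V) (hU : IsOpen U) (hne : (Q ∩ U).Nonempty) :
    ¬ FiniteDimensional ℝ (Submodule.span ℝ (Q ∩ U)) := by
  intro hfd
  obtain ⟨ψ⟩ := hQ
  set W : Submodule ℝ V := Submodule.span ℝ (Q ∩ U) with hW
  haveI : FiniteDimensional ℝ W := hfd
  -- Q is countable
  have hQcount : Q.Countable := by
    rw [← Set.countable_coe_iff]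
    exact ψ.toEquiv.countable_iff.mpr inferInstance
  -- a continuous linear equivalence of `W` with `Fin n → ℝ`
  let n := Module.finrank ℝ W
  have hfr : Module.finrank ℝ W = Module.finrank ℝ (Fin n → ℝ) := by
    simp [n]
  let e : W ≃L[ℝ] (Fin n → ℝ) := ContinuousLinearEquiv.ofFinrankEq hfr
  let φ : W ≃ₜ (Fin n → ℝ) := e.toHomeomorph
  -- the copy of `Q ∩ U` inside `Fin n → ℝ`
  let S : Set W := (Subtype.val) ⁻¹' (Q ∩ U)
  let A : Set (Fin n → ℝ) := φ '' S
  have hsub : Q ∩ U ⊆ (W : Set V) := Submodule.subset_span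
  -- A is nonempty
  obtain ⟨x₀, hx₀⟩ := hne
  have hAne : A.Nonempty := ⟨φ ⟨x₀, hsub hx₀⟩, ⟨x₀, hsub hx₀⟩, hx₀, rfl⟩
  -- closure of A is countable
  have hclA : closure A ⊆ φ '' ((Subtype.val : W → V) ⁻¹' Q) := by
    rw [← φ.image_closure]
    apply Set.image_mono
    have h1 : closure S ⊆ (Subtype.val : W → V) ⁻¹' closure (Q ∩ U) :=
      Continuous.closure_preimage_subset continuous_subtype_val _
    refine h1.trans ?_
    intro w hw
    exact hQclosed.closure_subset_iff.mpr Set.inter_subset_left hw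
  have hclAcount : (closure A).Countable := by
    refine Set.Countable.mono hclA ?_
    exact ((hQcount.preimage Subtype.val_injective).image _)
  -- A is preperfect
  have hpre : Preperfect A := by
    rw [preperfect_iff_nhds]
    rintro z ⟨w, hwS, rfl⟩ N hN
    obtain ⟨hwQ, hwU⟩ := hwS
    -- pull the neighborhood back to V
    have hM : φ ⁻¹' N ∈ nhds w := φ.continuous.continuousAt.preimage_mem_nhds hN
    rw [nhds_induced] at hM
    obtain ⟨T, hT, hTM⟩ := hM
    obtain ⟨O, hOT, hOopen, hwO⟩ := mem_nhds_iff.mp hT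
    -- use that `ℚ` has no isolated points
    set p : Q := ⟨(w : V), hwQ⟩
    set q : ℚ := ψ p
    have hRopen : IsOpen ((Subtype.val : Q → V) ⁻¹' (O ∩ U)) :=
      (hOopen.inter hU).preimage continuous_subtype_val
    have hpR : p ∈ (Subtype.val : Q → V) ⁻¹' (O ∩ U) := ⟨hwO, hwU⟩
    have himg : ψ '' ((Subtype.val : Q → V) ⁻¹' (O ∩ U)) ∈ nhds q :=
      (ψ.isOpen_image.mpr hRopen).mem_nhds ⟨p, hpR, rfl⟩
    have hne' : (ψ '' ((Subtype.val : Q → V) ⁻¹' (O ∩ U)) ∩ {q}ᶜ).Nonempty := by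
      have : ψ '' ((Subtype.val : Q → V) ⁻¹' (O ∩ U)) ∩ {q}ᶜ ∈ nhdsWithin q {q}ᶜ :=
        Filter.inter_mem (nhdsWithin_le_nhds himg) self_mem_nhdsWithin
      exact Filter.nonempty_of_mem this
    obtain ⟨q', ⟨p', hp', hp'q⟩, hq'ne⟩ := hne'
    have hp'p : p' ≠ p := by
      rintro rfl
      exact hq'ne (by simp [q, hp'q])
    have hy : (p' : V) ∈ Q ∩ U := ⟨p'.2, hp'.2⟩
    refine ⟨φ ⟨(p' : V), hsub hy⟩, ⟨hTM (hOT hp'.1), ⟨⟨(p' : V), hsub hy⟩, hy, rfl⟩⟩, ?_⟩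
    intro hcontra
    apply hp'p
    have h2 := congrArg Subtype.val (φ.injective hcontra)
    exact Subtype.ext h2
  -- closure A is perfect nonempty in a complete space, so it is uncountable
  have hperf : Perfect (closure A) := hpre.perfect_closure
  obtain ⟨f, hfr', hfc, hfi⟩ :=
    hperf.exists_nat_bool_injection (hAne.mono subset_closure)
  have hcnt : Countable (ℕ → Bool) := by
    haveI : Countable (Set.range f) := (hclAcount.mono hfr').to_subtype
    exact (Equiv.ofInjective f hfi).countable_iff.mpr inferInstance
  have hSet : Countable (Set ℕ) := by
    have e : (ℕ → Prop) ≃ (ℕ → Bool) := Equiv.arrowCongr (Equiv.refl ℕ) Equiv.propEquivBool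
    exact Countable.of_equiv _ (e.symm : (ℕ → Bool) ≃ Set ℕ)
  obtain ⟨g, hg⟩ := exists_injective_nat (Set ℕ)
  exact Function.cantor_injective g hg
end

section
/- Let A be a nonempty closed subset of a completely metrizable real topological vector space E such that for every nonempty relatively open subset U of A, the linear span of U is infinite-dimensional. Then A contains an uncountable linearly independent subset. -/
/-- Let `A` be a nonempty closed subset of a complete metric real topological vector
space such that the span of every nonempty relatively open subset of `A` is
infinite-dimensional. Then `A` contains an uncountable linearly independent set. -/
theorem stmt_17 {E : Type*} [AddCommGroup E] [Module ℝ E] [MetricSpace E]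
    [CompleteSpace E] [IsTopologicalAddGroup E] [ContinuousSMul ℝ E]
    (A : Set E) (hAne : A.Nonempty) (hAclosed : IsClosed A)
    (hspan : ∀ U : Set E, IsOpen U → (A ∩ U).Nonempty →
      ¬ FiniteDimensional ℝ (Submodule.span ℝ (A ∩ U))) :
    ∃ s ⊆ A, ¬ s.Countable ∧ LinearIndependent ℝ (fun x : s => (x : E)) := by
  by_contra h
  push_neg at h
  -- a spanning linearly independent subset of A
  obtain ⟨b, hbA, hbspan, hbli⟩ := exists_linearIndependent ℝ A
  have hbc : b.Countable := by
    by_contra hc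
    exact h b hbA hc hbli
  -- enumerate a countable superset
  obtain ⟨f, hf⟩ : ∃ f : ℕ → E, insert (0 : E) b = Set.range f :=
    ((hbc.insert 0).exists_eq_range (Set.insert_nonempty _ _))
  have hbf : b ⊆ Set.range f := by
    rw [← hf]; exact Set.subset_insert _ _
  -- finite-dimensional pieces
  set F : ℕ → Submodule ℝ E := fun n => Submodule.span ℝ (f '' Set.Iic n) with hF
  have hFfd : ∀ n, FiniteDimensional ℝ (F n) := fun n =>
    FiniteDimensional.span_of_finite ℝ ((Set.finite_Iic n).image f)
  have hFclosed : ∀ n, IsClosed ((F n) : Set E) := fun n =>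
    haveI := hFfd n
    Submodule.closed_of_finiteDimensional (F n)
  -- A is covered by the F n
  have hcover : ∀ x ∈ A, ∃ n, x ∈ F n := by
    intro x hx
    have hx1 : x ∈ Submodule.span ℝ b := by
      rw [hbspan]; exact Submodule.subset_span hx
    have hx2 : x ∈ Submodule.span ℝ (Set.range f) :=
      Submodule.span_mono hbf hx1
    obtain ⟨t, htf, hxt⟩ := Submodule.mem_span_finite_of_mem_span hx2
    choose g hg using fun y (hy : y ∈ t) => htf hy
    classical
    obtain ⟨n, hn⟩ := (t.finite_toSet.image fun y => if hy : y ∈ t then g y hy else 0).bddAbove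
    refine ⟨n, Submodule.span_mono ?_ hxt⟩
    intro y hy
    refine ⟨if hy' : y ∈ t then g y hy' else 0, ?_, ?_⟩
    · exact hn ⟨y, hy, rfl⟩
    · rw [dif_pos (Finset.mem_coe.mp hy)]
      exact hg y hy
  -- Baire category on the complete space A
  haveI : CompleteSpace A := hAclosed.completeSpace_coe
  haveI : Nonempty A := hAne.to_subtype
  have hbaire : (Set.univ : Set A) ⊆ ⋃ n, (fun x : A => (x : E)) ⁻¹' (F n) := by
    rintro ⟨x, hx⟩ -
    obtain ⟨n, hn⟩ := hcover x hx
    exact Set.mem_iUnion.2 ⟨n, hn⟩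
  have := nonempty_interior_of_iUnion_of_closed
    (fun n => (hFclosed n).preimage continuous_subtype_val)
    (Set.eq_univ_of_univ_subset hbaire)
  obtain ⟨n, a, ha⟩ := this
  -- extract an open set in E
  rw [mem_interior] at ha
  obtain ⟨V, hVsub, hVopen, haV⟩ := ha
  obtain ⟨U, hUopen, hUV⟩ := isOpen_induced_iff.1 hVopen
  refine hspan U hUopen ⟨a, a.2, by rw [← hUV] at haV; exact haV⟩ ?_
  haveI := hFfd n
  have hsub : A ∩ U ⊆ (F n : Set E) := by
    rintro x ⟨hxA, hxU⟩
    have : (⟨x, hxA⟩ : A) ∈ V := by rw [← hUV]; exact hxU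
    exact hVsub this
  have hle : Submodule.span ℝ (A ∩ U) ≤ F n := Submodule.span_le.2 hsub
  exact Submodule.finiteDimensional_of_le hle
end

section
/- The product space ωᵚ¹ := ℕ^{ω₁} (product of ω₁ copies of the discrete space ℕ) contains a closed subspace that is not a Baire space; consequently ℝ^{ω₁} is not hereditarily Baire. -/
open Cardinal Set

universe u v
noncomputable abbrev O1 : Type u := (aleph 1).ord.ToType

noncomputable instance : NoMaxOrder O1.{u} := Cardinal.noMaxOrder (aleph0_le_aleph 1)
instance : Nonempty O1.{u} := Ordinal.nonempty_toType_iff.2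
  (by simp [Cardinal.ord_eq_zero, (Ordinal.omega_pos 1).ne'])

example : OrderClosedTopology ℕ := inferInstance

lemma bounded_countable {s : Set O1.{u}} (hs : s.Countable) : ∃ b : O1.{u}, ∀ x ∈ s, x < b := by
  have h : #s < Order.cof O1.{u} := by
    rw [Ordinal.cof_toType, isRegular_aleph_one.cof_ord]
    exact hs.le_aleph0.trans_lt aleph0_lt_aleph_one
  have hnc : ¬ IsCofinal s := fun hc => (Order.cof_le hc).not_gt h
  simpa only [IsCofinal, not_forall, not_exists, not_and, not_le] using hnc

lemma mono_bdd (g : O1.{u} → ℕ) (hg : Monotone g) : ∃ n, ∀ α, g α ≤ n := by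
  by_contra h
  push_neg at h
  choose φ hφ using h
  obtain ⟨b, hb⟩ := bounded_countable (Set.countable_range φ)
  exact absurd (hg (hb _ (mem_range_self (g b))).le) (by simpa using hφ (g b))

lemma key_not_baire {R : Type v} [TopologicalSpace R] [T1Space R] (c : ℕ → R)
    (hc : Function.Injective c) (A : Set (O1.{u} → R))
    (hA : A = {f | ∃ g : O1.{u} → ℕ, Monotone g ∧ f = fun α => c (g α)}) :
    ¬ BaireSpace A := by
  intro hB
  set U : ℕ → Set A := fun n => {f | ∃ α, f.1 α ∉ c '' Iic n} with hU
  have hopen : ∀ n, IsOpen (U n) := by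
    intro n
    have : U n = ⋃ α, (fun f : A => f.1 α) ⁻¹' (c '' Iic n)ᶜ := by
      ext f; simp [hU]
    rw [this]
    exact isOpen_iUnion fun α =>
      (((Set.finite_Iic n).image c).isClosed.isOpen_compl).preimage
        ((continuous_apply α).comp continuous_subtype_val)
  have hdense : ∀ n, Dense (U n) := by
    intro n
    rw [dense_iff_inter_open]
    rintro V hV ⟨⟨f, hfA⟩, hfV⟩
    obtain ⟨W, hW, rfl⟩ := isOpen_induced_iff.1 hV
    obtain ⟨g, hg, rfl⟩ := hA ▸ hfA
    obtain ⟨I, u, hu, hIW⟩ := isOpen_pi_iff.1 hW _ hfV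
    obtain ⟨s, hs⟩ := (I : Set O1.{u}).toFinite.bddAbove
    obtain ⟨m, hm⟩ := mono_bdd g hg
    set k := max n m with hk
    set g' : O1.{u} → ℕ := fun β => if β ≤ s then g β else k + 1 with hg'
    have hg'mono : Monotone g' := by
      intro β γ hβγ
      by_cases h1 : β ≤ s <;> by_cases h2 : γ ≤ s <;> simp only [hg', h1, h2, if_pos, if_neg,
        if_true, if_false]
      · exact hg hβγ
      · exact le_trans ((hm β).trans (le_max_right n m)) (Nat.le_succ k)
      · exact absurd (hβγ.trans h2) h1
      · exact le_refl _
    have hf'A : (fun α => c (g' α)) ∈ A := hA ▸ ⟨g', hg'mono, rfl⟩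
    have hf'W : (fun α => c (g' α)) ∈ W := by
      apply hIW
      intro i hi
      have h1 : g' i = g i := if_pos (hs hi)
      show c (g' i) ∈ u i
      rw [h1]
      exact (hu i hi).2
    refine ⟨⟨(fun α => c (g' α)), hf'A⟩, hf'W, ?_⟩
    obtain ⟨α, hα⟩ := exists_gt s
    refine ⟨α, ?_⟩
    rintro ⟨m', hm', hcm'⟩
    have h1 : g' α = k + 1 := if_neg (not_le.2 hα)
    have h2 : c m' = c (g' α) := hcm'
    rw [h1] at h2
    have := hc h2
    simp only [mem_Iic] at hm'
    omega
  have hd : Dense (⋂ n, U n) := dense_iInter_of_isOpen hopen hdense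
  have hne : Nonempty A := by
    refine ⟨⟨fun _ => c 0, ?_⟩⟩
    exact hA ▸ ⟨fun _ => 0, monotone_const, rfl⟩
  obtain ⟨⟨f, hfA⟩, hf⟩ := hd.nonempty
  obtain ⟨g, hg, rfl⟩ := hA ▸ hfA
  obtain ⟨m, hm⟩ := mono_bdd g hg
  obtain ⟨α, hα⟩ := mem_iInter.1 hf m
  exact hα ⟨g α, hm α, rfl⟩

lemma isClosed_mono {R : Type v} [TopologicalSpace R] [Preorder R] [OrderClosedTopology R] :
    IsClosed {f : O1.{u} → R | Monotone f} := by
  have : {f : O1.{u} → R | Monotone f} =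
      ⋂ (p : O1.{u} × O1.{u}) (_ : p.1 ≤ p.2), {f : O1.{u} → R | f p.1 ≤ f p.2} := by
    ext f
    simp only [mem_setOf_eq, mem_iInter, Prod.forall]
    exact ⟨fun h a b hab => h hab, fun h a b hab => h a b hab⟩
  rw [this]
  exact isClosed_iInter fun p => isClosed_iInter fun _ =>
    isClosed_le (continuous_apply p.1) (continuous_apply p.2)

/-- `ℕ^{ω₁}` contains a closed subspace which is not a Baire space; consequently
`ℝ^{ω₁}` is not hereditarily Baire. -/
theorem stmt_18 :
    (∃ A : Set ((aleph 1).ord.ToType → ℕ), IsClosed A ∧ ¬ BaireSpace A) ∧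
    ¬ (∀ C : Set ((aleph 1).ord.ToType → ℝ), IsClosed C → BaireSpace C) := by
  constructor
  · refine ⟨{f : O1.{u_1} → ℕ | Monotone f}, isClosed_mono (R := ℕ), ?_⟩
    apply key_not_baire (id : ℕ → ℕ) Function.injective_id
    ext f
    simp only [mem_setOf_eq, id]
    exact ⟨fun h => ⟨f, h, rfl⟩, fun ⟨g, hg, h⟩ => h ▸ hg⟩
  · intro H
    set C : Set (O1.{u_2} → ℝ) :=
      {f | Monotone f} ∩ ⋂ α, (fun f : O1.{u_2} → ℝ => f α) ⁻¹' range ((↑) : ℕ → ℝ) with hCdef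
    have hclosed : IsClosed C := by
      rw [hCdef]
      exact (isClosed_mono (R := ℝ)).inter (isClosed_iInter fun α =>
        Nat.isClosedEmbedding_coe_real.isClosed_range.preimage (continuous_apply α))
    have hC : C = {f | ∃ g : O1.{u_2} → ℕ, Monotone g ∧ f = fun α => ((g α : ℕ) : ℝ)} := by
      ext f
      simp only [hCdef, mem_inter_iff, mem_setOf_eq, mem_iInter, mem_preimage, mem_range]
      constructor
      · rintro ⟨hmono, hrange⟩
        choose g hg using hrange
        refine ⟨g, ?_, by funext α; rw [hg α]⟩
        intro α β h
        have h2 := hmono h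
        rw [← hg α, ← hg β] at h2
        exact_mod_cast h2
      · rintro ⟨g, hg, rfl⟩
        exact ⟨fun α β h => Nat.cast_le.2 (hg h), fun α => ⟨g α, rfl⟩⟩
    exact key_not_baire ((↑) : ℕ → ℝ) Nat.cast_injective C hC (H C hclosed)
end

section
/- Let A = {f : ω₁ → ℕ : f is non-decreasing} with the topology inherited from the product ℕ^{ω₁}. For each n, the set A_n = {f ∈ A : ∀α, f(α) ≤ n} is a closed subset of A with empty interior in A, and A = ⋃_{n∈ℕ} A_n; hence A is meager in itself. -/
universe u

open Cardinal

/-- Any countable sequence in `(aleph 1).ord.ToType` is bounded above. -/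
lemma stmt_19_aux (P : ℕ → (aleph 1 : Cardinal.{u}).ord.ToType) :
    ∃ β, ∀ n, P n ≤ β := by
  set o : ℕ → Ordinal.{u} :=
    fun n => ((Ordinal.ToType.mk (o := (aleph 1 : Cardinal.{u}).ord)).symm (P n)).1 with ho
  have h1 : ∀ n, o n < (aleph 1).ord := fun n =>
    ((Ordinal.ToType.mk (o := (aleph 1 : Cardinal.{u}).ord)).symm (P n)).2
  have h2 : iSup o < (aleph 1).ord := by
    rw [Cardinal.ord_aleph] at h1 ⊢; exact Ordinal.iSup_lt_omega_one h1
  refine ⟨(Ordinal.ToType.mk (o := (aleph 1 : Cardinal.{u}).ord)) ⟨iSup o, h2⟩, fun n => ?_⟩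
  have hP : P n = (Ordinal.ToType.mk (o := (aleph 1 : Cardinal.{u}).ord))
      ((Ordinal.ToType.mk (o := (aleph 1 : Cardinal.{u}).ord)).symm (P n)) := by
    simp
  rw [hP]
  rw [((Ordinal.ToType.mk (o := (aleph 1 : Cardinal.{u}).ord))).le_iff_le]
  exact Subtype.mk_le_mk.mpr (Ordinal.le_iSup o n)

/-- Let `A` be the set of non-decreasing functions `ω₁ → ℕ`, with the topology inherited
from the product `ℕ^{ω₁}`. Each `Aₙ = {f ∈ A : f ≤ n}` is closed with empty interior in
`A`, the `Aₙ` cover `A`, and hence `A` is meager in itself. -/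
theorem stmt_19 :
    let A : Set ((aleph 1).ord.ToType → ℕ) := {f | Monotone f}
    let S : ℕ → Set A := fun n => {g | ∀ α, (g : (aleph 1).ord.ToType → ℕ) α ≤ n}
    (∀ n, IsClosed (S n) ∧ interior (S n) = ∅) ∧
    (⋃ n, S n) = Set.univ ∧
    IsMeagre (Set.univ : Set A) := by
  intro A S
  haveI : NoMaxOrder (aleph 1).ord.ToType := Cardinal.noMaxOrder (aleph0_le_aleph 1)
  haveI : Nonempty (aleph 1).ord.ToType := by
    rw [Ordinal.nonempty_toType_iff]
    have : (0 : Ordinal) < (aleph 1).ord := by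
      have h0 : (0 : Cardinal) < aleph 1 :=
        lt_of_lt_of_le aleph0_pos (aleph0_le_aleph 1)
      simpa using Cardinal.ord_lt_ord.2 h0
    exact this.ne'
  -- Closedness
  have hclosed : ∀ n, IsClosed (S n) := by
    intro n
    have : S n = ⋂ α : (aleph 1).ord.ToType, {g : A | (g : (aleph 1).ord.ToType → ℕ) α ≤ n} := by
      ext g; simp [S, Set.mem_iInter]
    rw [this]
    refine isClosed_iInter fun α => ?_
    have hc : Continuous fun g : A => (g : (aleph 1).ord.ToType → ℕ) α :=
      (continuous_apply α).comp continuous_subtype_val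
    exact IsClosed.preimage hc (isClosed_discrete {m : ℕ | m ≤ n})
  -- Empty interior
  have hint : ∀ n, interior (S n) = ∅ := by
    intro n
    rw [Set.eq_empty_iff_forall_notMem]
    intro x hx
    have hxS : ∀ α, (x : (aleph 1).ord.ToType → ℕ) α ≤ n := interior_subset hx
    rw [mem_interior_iff_mem_nhds, nhds_subtype, Filter.mem_comap] at hx
    obtain ⟨V, hV, hVS⟩ := hx
    rw [nhds_pi] at hV
    have hV' := hV
    rw [Filter.mem_pi'] at hV'
    obtain ⟨I, t, ht, hts⟩ := hV'
    obtain ⟨β₀, hβ₀⟩ := I.exists_le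
    obtain ⟨γ, hγ⟩ := exists_gt β₀
    set h : (aleph 1).ord.ToType → ℕ := fun α => if α ≤ β₀ then (x : (aleph 1).ord.ToType → ℕ) α else n + 1 with hh
    have hmono : Monotone h := by
      intro a b hab
      simp only [hh]
      by_cases hb : b ≤ β₀
      · rw [if_pos (hab.trans hb), if_pos hb]; exact x.2 hab
      · rw [if_neg hb]
        by_cases ha : a ≤ β₀
        · rw [if_pos ha]
          exact le_trans (hxS a) (Nat.le_succ n)
        · rw [if_neg ha]
    have hmem : (⟨h, hmono⟩ : ↥A) ∈ S n := by
      apply hVS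
      apply hts
      intro i hi
      show h i ∈ t i
      have heq : h i = (x : (aleph 1).ord.ToType → ℕ) i := if_pos (hβ₀ i hi)
      rw [heq]
      exact mem_of_mem_nhds (ht i)
    have h2 : (if γ ≤ β₀ then (x : (aleph 1).ord.ToType → ℕ) γ else n + 1) ≤ n := hmem γ
    rw [if_neg (not_le.2 hγ)] at h2
    omega
  -- Union
  have hunion : (⋃ n, S n) = Set.univ := by
    rw [Set.eq_univ_iff_forall]
    intro g
    simp only [Set.mem_iUnion, S, Set.mem_setOf_eq]
    by_contra hcon
    push_neg at hcon
    choose P hP using hcon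
    obtain ⟨β, hβ⟩ := stmt_19_aux P
    have : ∀ n : ℕ, n < (g : (aleph 1).ord.ToType → ℕ) β := fun n =>
      lt_of_lt_of_le (hP n) (g.2 (hβ n))
    exact lt_irrefl _ (this ((g : (aleph 1).ord.ToType → ℕ) β))
  refine ⟨fun n => ⟨hclosed n, hint n⟩, hunion, ?_⟩
  rw [← hunion]
  apply isMeagre_iUnion
  intro n
  rw [isMeagre_iff_countable_union_isNowhereDense]
  exact ⟨{S n}, by
    simp only [Set.mem_singleton_iff, forall_eq]
    exact (hclosed n).isNowhereDense_iff.mpr (hint n),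
    Set.countable_singleton _, by simp⟩
end
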